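/- arXiv:2503.04247 — 10 statements merged into one kernel-verified Lean document; each statement's English description precedes it below -/
import Mathlib

section
/- For integers n ≥ 1 and k ≥ 0, the number of chains e₁ ≤ e₂ ≤ ⋯ ≤ e_{u-1} in the poset of n-tuples of nonnegative integers with coordinate-wise order and total sum at most k equals the binomial coefficient C(n(u-1)+k, k), for every integer u ≥ 2. -/
/-!
A chain `c₁ ≤ ⋯ ≤ cₘ` in `ℕⁿ` is determined by its increments `cⱼ - cⱼ₋₁` (with `c₀ = 0`),
which are arbitrary, and since the chain is monotone the bound `|cⱼ| ≤ k` for all `j` amounts to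
the `nm` coordinates of the increments summing to at most `k`. With one slack coordinate these
are the solutions of `x₀ + ⋯ + x_{nm} = k` in `ℕ`, counted by stars and bars: `C(nm + k, k)`.
-/

open Finset

namespace Fin

variable {M : Type*} {m : ℕ}

theorem partialSum_last [AddCommMonoid M] (d : Fin m → M) :
    partialSum d (last m) = ∑ t, d t := by
  rw [partialSum, val_last, List.take_of_length_le (by simp), List.sum_ofFn]

def increments [Sub M] (f : Fin (m + 1) → M) : Fin m → M := fun j => f j.succ - f j.castSucc

variable [AddCommMonoid M] [PartialOrder M]

theorem increments_partialSum [Sub M] [OrderedSub M] [AddLeftReflectLE M] (d : Fin m → M) :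
    increments (partialSum d) = d := by
  funext j
  rw [increments, partialSum_succ, add_tsub_cancel_left]

variable [CanonicallyOrderedAdd M]

theorem monotone_partialSum (d : Fin m → M) : Monotone (partialSum d) :=
  monotone_iff_le_succ.2 fun j => by rw [partialSum_succ]; exact le_self_add

theorem monotone_cons_zero {c : Fin m → M} (hc : Monotone c) :
    Monotone (cons 0 c : Fin (m + 1) → M) := by
  intro i j hij
  cases i using Fin.cases with
  | zero => simp only [cons_zero]; exact _root_.zero_le
  | succ i =>
    cases j using Fin.cases with
    | zero => exact absurd hij (not_le.2 (succ_pos i : (0 : Fin (m + 1)) < i.succ))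
    | succ j => simpa using hc (succ_le_succ_iff.1 hij)

variable [Sub M] [OrderedSub M]

theorem partialSum_increments {f : Fin (m + 1) → M} (hf : Monotone f) (h0 : f 0 = 0) :
    partialSum (increments f) = f := by
  funext j
  induction j using Fin.induction with
  | zero => rw [partialSum_zero, h0]
  | succ j ih =>
    rw [partialSum_succ, ih, increments, add_tsub_cancel_of_le (hf j.castSucc_le_succ)]

def monotoneEquivIncrements [AddLeftReflectLE M] : {c : Fin m → M // Monotone c} ≃ (Fin m → M) where
  toFun c := increments (cons 0 c.1)
  invFun d := ⟨tail (partialSum d), fun _ _ h => monotone_partialSum d (succ_le_succ_iff.2 h)⟩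
  left_inv c := Subtype.ext <| by
    simp only [partialSum_increments (monotone_cons_zero c.2) (cons_zero _ _), tail_cons]
  right_inv d := by
    have h := cons_self_tail (partialSum d)
    rw [partialSum_zero] at h
    simp only [h, increments_partialSum]

end Fin

theorem card_tuples_sum_le (α : Type*) [Fintype α] (k : ℕ) :
    Nat.card {g : α → ℕ // ∑ a, g a ≤ k} = (Fintype.card α + k).choose k := by
  classical
  let slack : {g : α → ℕ // ∑ a, g a ≤ k} ≃ {h : Option α → ℕ // ∑ o, h o = k} :=
    { toFun g := ⟨fun o => o.elim (k - ∑ a, g.1 a) g.1, by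
        rw [Fintype.sum_option]; exact tsub_add_cancel_of_le g.2⟩
      invFun h := ⟨fun a => h.1 (some a),
        le_add_self.trans_eq ((Fintype.sum_option h.1).symm.trans h.2)⟩
      left_inv _ := rfl
      right_inv h := by
        refine Subtype.ext (funext fun o => ?_)
        cases o with
        | none =>
          have hsum := h.2
          rw [Fintype.sum_option] at hsum
          exact tsub_eq_of_eq_add hsum.symm
        | some a => rfl }
  rw [Nat.card_congr (slack.trans (Sym.equivNatSumOfFintype _ k).symm), Nat.card_eq_fintype_card,
    Sym.card_sym_eq_choose, Fintype.card_option, Nat.add_right_comm, Nat.add_sub_cancel]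

theorem forall_sum_tail_partialSum_le_iff {m n k : ℕ} (d : Fin m → Fin n → ℕ) :
    (∀ s, ∑ i, Fin.tail (Fin.partialSum d) s i ≤ k) ↔ ∑ t, ∑ i, d t i ≤ k := by
  let w : Fin (m + 1) → ℕ := fun s => ∑ i, Fin.partialSum d s i
  have hw : Monotone w := fun _ _ h => sum_le_sum fun i _ => Fin.monotone_partialSum d h i
  have hw_last : w (Fin.last m) = ∑ t, ∑ i, d t i := by
    simp only [w, Fin.partialSum_last, Finset.sum_apply]
    exact sum_comm
  calc (∀ s : Fin m, w s.succ ≤ k) ↔ ∀ s, w s ≤ k := by simp [Fin.forall_fin_succ, w]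
    _ ↔ w (Fin.last m) ≤ k := ⟨fun h => h _, fun h s => (hw (Fin.le_last s)).trans h⟩
    _ ↔ _ := by rw [hw_last]

theorem card_chains_sum_le (n m k : ℕ) :
    Nat.card {c : Fin m → (Fin n → ℕ) // Monotone c ∧ ∀ s, ∑ i, c s i ≤ k} =
    (n * m + k).choose k := by
  let toIncrements : {c : Fin m → (Fin n → ℕ) // Monotone c ∧ ∀ s, ∑ i, c s i ≤ k} ≃
      {d : Fin m → Fin n → ℕ // ∑ t, ∑ i, d t i ≤ k} :=
    (Equiv.subtypeSubtypeEquivSubtypeInter Monotone _).symm.trans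
      (Fin.monotoneEquivIncrements.symm.subtypeEquiv fun d =>
        (forall_sum_tail_partialSum_le_iff d).symm).symm
  let uncurry : {d : Fin m → Fin n → ℕ // ∑ t, ∑ i, d t i ≤ k} ≃
      {g : Fin m × Fin n → ℕ // ∑ p, g p ≤ k} :=
    (Equiv.curry _ _ _).symm.subtypeEquiv fun d => by simp [Fintype.sum_prod_type]
  rw [Nat.card_congr (toIncrements.trans uncurry), card_tuples_sum_le, Fintype.card_prod,
    Fintype.card_fin, Fintype.card_fin, mul_comm]

theorem chains_count_sum_le_general (n k u : ℕ) :
    Nat.card {c : Fin (u - 1) → (Fin n → ℕ) //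
      Monotone c ∧ ∀ s, ∑ i, c s i ≤ k} =
    Nat.choose (n * (u - 1) + k) k :=
  card_chains_sum_le n (u - 1) k

/-- For n ≥ 1, k ≥ 0 and u ≥ 2, the number of chains
`e₁ ≤ e₂ ≤ ⋯ ≤ e_{u-1}` in the poset of n-tuples of nonnegative integers,
ordered coordinate-wise, with total sum at most k, equals `C(n(u-1)+k, k)`. -/
theorem chains_count_sum_le (n k u : ℕ) (hn : 1 ≤ n) (hu : 2 ≤ u) :
    Nat.card {c : Fin (u - 1) → (Fin n → ℕ) //
      Monotone c ∧ ∀ s, ∑ i, c s i ≤ k} =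
    Nat.choose (n * (u - 1) + k) k :=
  chains_count_sum_le_general n k u
end

section
/- For n ≥ 1 and k ≥ 0, the M-triangle of the poset of n-tuples of nonnegative integers with sum at most k equals the double sum over 0 ≤ r and 0 ≤ ℓ with r + ℓ ≤ k of C(ℓ+n−1, n−1)·C(n, r)·(−X)^ℓ·(−Y)^{ℓ+r}. -/
open Finset

/-- The set `P(n,k)` of n-tuples of nonnegative integers with total sum at most `k`,
realized as a `Finset` of `Fin n → ℕ`. -/
def tuplesSumLE (n k : ℕ) : Finset (Fin n → ℕ) :=
  (Finset.Icc (0 : Fin n → ℕ) (fun _ => k)).filter (fun x => ∑ i, x i ≤ k)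

/-- The number of non-zero coordinates of a tuple. -/
def nz {n : ℕ} (x : Fin n → ℕ) : ℕ := (Finset.univ.filter fun i => x i ≠ 0).card

lemma mem_tuplesSumLE {n k : ℕ} {a : Fin n → ℕ} :
    a ∈ tuplesSumLE n k ↔ ∑ i, a i ≤ k := by
  constructor
  · intro h; exact (Finset.mem_filter.mp h).2
  · intro h
    refine Finset.mem_filter.mpr ⟨Finset.mem_Icc.mpr ⟨?_, ?_⟩, h⟩
    · intro i; exact Nat.zero_le _
    · intro i
      exact le_trans (Finset.single_le_sum (fun j _ => Nat.zero_le (a j)) (mem_univ i)) h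

/-! ### Counting tuples with a fixed sum -/

lemma card_finset_sum {α β : Type*} (s : Finset β) (f : β → Multiset α) :
    Multiset.card (∑ i ∈ s, f i) = ∑ i ∈ s, Multiset.card (f i) := by
  induction s using Finset.cons_induction with
  | empty => simp
  | cons a s ha ih => simp [Finset.sum_cons, ih]

lemma count_univ_sum_replicate {n : ℕ} (a : Fin n → ℕ) (j : Fin n) :
    Multiset.count j (∑ i, Multiset.replicate (a i) i) = a j := by
  rw [Multiset.count_sum']
  simp [Multiset.count_replicate, Finset.sum_ite_eq]

lemma sum_count_univ {n : ℕ} (m : Multiset (Fin n)) :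
    ∑ i, Multiset.count i m = Multiset.card m := by
  rw [← Multiset.toFinset_sum_count_eq m]
  exact (Finset.sum_subset (Finset.subset_univ _)
    (fun i _ hi => Multiset.count_eq_zero.mpr (by simpa using hi))).symm

lemma key_card (n k l : ℕ) (hl : l ≤ k) :
    ((tuplesSumLE n k).filter fun a => ∑ i, a i = l).card
      = Fintype.card (Sym (Fin n) l) := by
  rw [← Finset.card_univ]
  refine Finset.card_bij'
    (fun a ha => ⟨∑ i, Multiset.replicate (a i) i, by
      rw [Finset.mem_filter] at ha
      rw [card_finset_sum]
      simp [Multiset.card_replicate, ha.2]⟩)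
    (fun m _ => fun i => Multiset.count i (m : Multiset (Fin n)))
    (fun a ha => Finset.mem_univ _)
    (fun m hm => ?_) ?_ ?_
  case refine_1 =>
    rw [Finset.mem_filter, mem_tuplesSumLE]
    obtain ⟨m, hm'⟩ := m
    simp only [Sym.coe_mk]
    have hsum : ∑ i, Multiset.count i m = l := by
      rw [sum_count_univ, hm']
    exact ⟨by omega, hsum⟩
  case refine_2 =>
    intro a ha
    funext j
    exact count_univ_sum_replicate a j
  case refine_3 =>
    intro m hm
    obtain ⟨m, hm'⟩ := m
    exact Subtype.ext (Multiset.ext.mpr fun j =>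
      count_univ_sum_replicate (fun i => Multiset.count i m) j)

lemma card_fiber (n k l : ℕ) (hn : 1 ≤ n) (hl : l ≤ k) :
    ((tuplesSumLE n k).filter fun a => ∑ i, a i = l).card
      = (l + n - 1).choose (n - 1) := by
  rw [key_card n k l hl, Sym.card_sym_eq_choose, Fintype.card_fin]
  have h1 : n + l - 1 = l + n - 1 := by omega
  have h2 : l + n - 1 - l = n - 1 := by omega
  rw [h1, ← h2]
  exact (Nat.choose_symm (show l ≤ l + n - 1 by omega)).symm

/-! ### Algebraic helper lemmas -/

lemma pow_key {F : Type*} [Field F] (X Y : F) (hX : X ≠ 0) (m c : ℕ) :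
    (X * Y) ^ (m + c) * (-X⁻¹) ^ c = (X * Y) ^ m * (-Y) ^ c := by
  have h : ((X * Y) * (-X⁻¹)) ^ c = (-Y) ^ c := by
    congr 1
    field_simp
  rw [pow_add, mul_assoc, ← mul_pow, h]

lemma sign_id {F : Type*} [Field F] (X Y : F) (l r : ℕ) :
    (-X) ^ l * (-Y) ^ (l + r) = (X * Y) ^ l * (-Y) ^ r := by
  rw [pow_add, ← mul_assoc, ← mul_pow, neg_mul_neg]

lemma expand_nz {F : Type*} [Field F] (X : F) {n : ℕ} (a : Fin n → ℕ) :
    (1 - X⁻¹) ^ (nz a)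
      = ∑ S ∈ (Finset.univ.filter fun i => a i ≠ 0).powerset, (-X⁻¹) ^ S.card := by
  have := Finset.prod_add (fun _ : Fin n => -X⁻¹) (fun _ => (1 : F))
      (Finset.univ.filter fun i => a i ≠ 0)
  simp only [Finset.prod_const, Finset.prod_const_one, mul_one] at this
  have h1 : (1 : F) - X⁻¹ = -X⁻¹ + 1 := by ring
  rw [nz, h1, this]
  simp

lemma sum_ind {n : ℕ} (S : Finset (Fin n)) :
    ∑ i, (if i ∈ S then 1 else 0) = S.card := by
  simp [Finset.sum_ite_mem]

/-! ### The two halves of the proof -/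

set_option maxHeartbeats 1000000 in
lemma lhs_eq_middle {F : Type*} [Field F] (X Y : F) (hX : X ≠ 0) (n k : ℕ) :
    ∑ a ∈ tuplesSumLE n k, (X * Y) ^ (∑ i, a i) * (1 - X⁻¹) ^ (nz a)
      = ∑ b ∈ tuplesSumLE n k,
          ∑ S ∈ (Finset.univ : Finset (Fin n)).powerset.filter
            (fun S => ∑ i, b i + S.card ≤ k),
            (X * Y) ^ (∑ i, b i) * (-Y) ^ S.card := by
  have expand : ∀ a ∈ tuplesSumLE n k,
      (X * Y) ^ (∑ i, a i) * (1 - X⁻¹) ^ (nz a)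
        = ∑ S ∈ (Finset.univ.filter fun i => a i ≠ 0).powerset,
            (X * Y) ^ (∑ i, a i) * (-X⁻¹) ^ S.card := by
    intro a _
    rw [expand_nz X a, Finset.mul_sum]
  calc
    ∑ a ∈ tuplesSumLE n k, (X * Y) ^ (∑ i, a i) * (1 - X⁻¹) ^ (nz a)
        = ∑ p ∈ (tuplesSumLE n k).sigma
              (fun a => (Finset.univ.filter fun i => a i ≠ 0).powerset),
            (X * Y) ^ (∑ i, p.1 i) * (-X⁻¹) ^ p.2.card := by
          rw [Finset.sum_congr rfl expand]
          exact Finset.sum_sigma' _ _ (fun (a : Fin n → ℕ) (S : Finset (Fin n)) => (X * Y) ^ (∑ i, a i) * (-X⁻¹) ^ S.card)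
    _ = ∑ p ∈ (tuplesSumLE n k).sigma
              (fun b => (Finset.univ : Finset (Fin n)).powerset.filter
                (fun S => ∑ i, b i + S.card ≤ k)),
            (X * Y) ^ (∑ i, p.1 i) * (-Y) ^ p.2.card := ?_
    _ = _ := (Finset.sum_sigma' _ _ (fun (b : Fin n → ℕ) (S : Finset (Fin n)) => (X * Y) ^ (∑ i, b i) * (-Y) ^ S.card)).symm
  refine Finset.sum_nbij'
    (fun p => ⟨fun i => p.1 i - (if i ∈ p.2 then 1 else 0), p.2⟩)
    (fun p => ⟨fun i => p.1 i + (if i ∈ p.2 then 1 else 0), p.2⟩)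
    ?_ ?_ ?_ ?_ ?_
  · -- maps to
    rintro ⟨a, S⟩ hp
    rw [Finset.mem_sigma] at hp
    dsimp only at hp
    obtain ⟨ha, hS⟩ := hp
    rw [Finset.mem_powerset] at hS
    have hle : ∀ i, (if i ∈ S then 1 else 0) ≤ a i := by
      intro i
      by_cases h : i ∈ S
      · simp only [h, if_true]
        have := hS h
        simp only [Finset.mem_filter] at this
        omega
      · simp [h]
    have hsum : (∑ i, (a i - (if i ∈ S then 1 else 0))) + S.card = ∑ i, a i := by
      rw [← sum_ind S, ← Finset.sum_add_distrib]
      exact Finset.sum_congr rfl fun i _ => Nat.sub_add_cancel (hle i)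
    rw [Finset.mem_sigma]
    constructor
    · rw [mem_tuplesSumLE]
      have := mem_tuplesSumLE.mp ha
      dsimp only
      omega
    · rw [Finset.mem_filter, Finset.mem_powerset]
      refine ⟨Finset.subset_univ _, ?_⟩
      have := mem_tuplesSumLE.mp ha
      dsimp only
      omega
  · -- maps back
    rintro ⟨b, S⟩ hp
    rw [Finset.mem_sigma, Finset.mem_filter] at hp
    dsimp only at hp
    obtain ⟨hb, -, hcond⟩ := hp
    have hsum : (∑ i, (b i + (if i ∈ S then 1 else 0))) = ∑ i, b i + S.card := by
      rw [← sum_ind S, ← Finset.sum_add_distrib]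
    rw [Finset.mem_sigma]
    constructor
    · rw [mem_tuplesSumLE]; dsimp only; omega
    · rw [Finset.mem_powerset]
      intro i hi
      simp only [Finset.mem_filter, Finset.mem_univ, true_and]
      simp [hi]
  · -- j ∘ i = id
    rintro ⟨a, S⟩ hp
    rw [Finset.mem_sigma, Finset.mem_powerset] at hp
    dsimp only at hp ⊢
    obtain ⟨-, hS⟩ := hp
    have hle : ∀ i, (if i ∈ S then 1 else 0) ≤ a i := by
      intro i
      by_cases h : i ∈ S
      · simp only [h, if_true]
        have := hS h
        simp only [Finset.mem_filter] at this
        omega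
      · simp [h]
    exact congrArg (fun f => (⟨f, S⟩ : (_ : Fin n → ℕ) × Finset (Fin n)))
      (funext fun i => Nat.sub_add_cancel (hle i))
  · rintro ⟨b, S⟩ hp
    dsimp only
    exact congrArg (fun f => (⟨f, S⟩ : (_ : Fin n → ℕ) × Finset (Fin n)))
      (funext fun i => by omega)
  · -- summands agree
    rintro ⟨a, S⟩ hp
    rw [Finset.mem_sigma, Finset.mem_powerset] at hp
    dsimp only at hp ⊢
    obtain ⟨-, hS⟩ := hp
    have hle : ∀ i, (if i ∈ S then 1 else 0) ≤ a i := by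
      intro i
      by_cases h : i ∈ S
      · simp only [h, if_true]
        have := hS h
        simp only [Finset.mem_filter] at this
        omega
      · simp [h]
    have hsum : (∑ i, (a i - (if i ∈ S then 1 else 0))) + S.card = ∑ i, a i := by
      rw [← sum_ind S, ← Finset.sum_add_distrib]
      exact Finset.sum_congr rfl fun i _ => Nat.sub_add_cancel (hle i)
    rw [← hsum, pow_key X Y hX]

lemma middle_eq_rhs {F : Type*} [Field F] (X Y : F) (n k : ℕ) (hn : 1 ≤ n) :
    (∑ b ∈ tuplesSumLE n k,
      ∑ S ∈ (Finset.univ : Finset (Fin n)).powerset.filter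
        (fun S => ∑ i, b i + S.card ≤ k),
        (X * Y) ^ (∑ i, b i) * (-Y) ^ S.card)
    = ∑ r ∈ Finset.range (k + 1), ∑ l ∈ Finset.range (k - r + 1),
        ((l + n - 1).choose (n - 1) : F) * (n.choose r : F) * (-X) ^ l * (-Y) ^ (l + r) := by
  have hmap : ∀ b ∈ tuplesSumLE n k, (∑ i, b i) ∈ Finset.range (k + 1) := fun b hb =>
    Finset.mem_range.mpr (Nat.lt_succ_of_le (mem_tuplesSumLE.mp hb))
  calc
    (∑ b ∈ tuplesSumLE n k,
      ∑ S ∈ (Finset.univ : Finset (Fin n)).powerset.filter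
        (fun S => ∑ i, b i + S.card ≤ k),
        (X * Y) ^ (∑ i, b i) * (-Y) ^ S.card)
        = ∑ l ∈ Finset.range (k + 1),
            ∑ b ∈ (tuplesSumLE n k).filter (fun b => ∑ i, b i = l),
            ∑ S ∈ (Finset.univ : Finset (Fin n)).powerset.filter
              (fun S => ∑ i, b i + S.card ≤ k),
              (X * Y) ^ (∑ i, b i) * (-Y) ^ S.card :=
      (Finset.sum_fiberwise_of_maps_to hmap _).symm
    _ = ∑ l ∈ Finset.range (k + 1),
          ((l + n - 1).choose (n - 1) : F) *
            ∑ r ∈ Finset.range (n + 1),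
              (n.choose r : F) * (if l + r ≤ k then (X * Y) ^ l * (-Y) ^ r else 0) := by
      refine Finset.sum_congr rfl fun l hl => ?_
      have hlk : l ≤ k := Nat.lt_succ_iff.mp (Finset.mem_range.mp hl)
      have step1 : ∀ b ∈ (tuplesSumLE n k).filter (fun b => ∑ i, b i = l),
          (∑ S ∈ (Finset.univ : Finset (Fin n)).powerset.filter
            (fun S => ∑ i, b i + S.card ≤ k),
            (X * Y) ^ (∑ i, b i) * (-Y) ^ S.card)
          = ∑ S ∈ (Finset.univ : Finset (Fin n)).powerset,
              (if l + S.card ≤ k then (X * Y) ^ l * (-Y) ^ S.card else 0) := by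
        intro b hb
        have hbl : ∑ i, b i = l := (Finset.mem_filter.mp hb).2
        rw [Finset.sum_filter]
        simp only [hbl]
      rw [Finset.sum_congr rfl step1, Finset.sum_const, nsmul_eq_mul,
        card_fiber n k l hn hlk]
      congr 1
      rw [Finset.sum_powerset]
      simp only [Finset.card_univ, Fintype.card_fin]
      refine Finset.sum_congr rfl fun r hr => ?_
      have step2 : ∀ S ∈ Finset.powersetCard r (Finset.univ : Finset (Fin n)),
          (if l + S.card ≤ k then (X * Y) ^ l * (-Y) ^ S.card else 0)
          = (if l + r ≤ k then (X * Y) ^ l * (-Y) ^ r else 0) := by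
        intro S hS
        rw [(Finset.mem_powersetCard.mp hS).2]
      rw [Finset.sum_congr rfl step2, Finset.sum_const, nsmul_eq_mul,
        Finset.card_powersetCard, Finset.card_univ, Fintype.card_fin]
    _ = ∑ l ∈ Finset.range (k + 1), ∑ r ∈ Finset.range (k + 1),
          (if l + r ≤ k then
            ((l + n - 1).choose (n - 1) : F) * (n.choose r : F) * (-X) ^ l * (-Y) ^ (l + r)
          else 0) := by
      refine Finset.sum_congr rfl fun l hl => ?_
      have hlk : l ≤ k := Nat.lt_succ_iff.mp (Finset.mem_range.mp hl)
      rw [Finset.mul_sum]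
      have hterm : ∀ r : ℕ,
          ((l + n - 1).choose (n - 1) : F) *
            ((n.choose r : F) * (if l + r ≤ k then (X * Y) ^ l * (-Y) ^ r else 0))
          = (if l + r ≤ k then
              ((l + n - 1).choose (n - 1) : F) * (n.choose r : F) * (-X) ^ l * (-Y) ^ (l + r)
            else 0) := by
        intro r
        by_cases h : l + r ≤ k
        · rw [if_pos h, if_pos h, ← sign_id X Y l r]
          ring
        · rw [if_neg h, if_neg h, mul_zero, mul_zero]
      have hzero : ∀ r : ℕ, n < r ∨ k < l + r →
          ((l + n - 1).choose (n - 1) : F) *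
            ((n.choose r : F) * (if l + r ≤ k then (X * Y) ^ l * (-Y) ^ r else 0)) = 0 := by
        intro r hr
        rcases hr with hr | hr
        · rw [Nat.choose_eq_zero_of_lt hr]
          simp
        · rw [if_neg (by omega)]
          simp
      calc
        ∑ r ∈ Finset.range (n + 1),
            ((l + n - 1).choose (n - 1) : F) *
              ((n.choose r : F) * (if l + r ≤ k then (X * Y) ^ l * (-Y) ^ r else 0))
            = ∑ r ∈ Finset.range (n + k + 1),
                ((l + n - 1).choose (n - 1) : F) *
                  ((n.choose r : F) * (if l + r ≤ k then (X * Y) ^ l * (-Y) ^ r else 0)) := by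
          refine Finset.sum_subset (Finset.range_subset_range.mpr (by omega)) ?_
          intro r _ hr
          exact hzero r (Or.inl (by simp only [Finset.mem_range] at hr; omega))
        _ = ∑ r ∈ Finset.range (k + 1),
                ((l + n - 1).choose (n - 1) : F) *
                  ((n.choose r : F) * (if l + r ≤ k then (X * Y) ^ l * (-Y) ^ r else 0)) := by
          refine (Finset.sum_subset (Finset.range_subset_range.mpr (by omega)) ?_).symm
          intro r _ hr
          exact hzero r (Or.inr (by simp only [Finset.mem_range] at hr; omega))
        _ = _ := Finset.sum_congr rfl fun r _ => hterm r
    _ = ∑ r ∈ Finset.range (k + 1), ∑ l ∈ Finset.range (k + 1),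
          (if l + r ≤ k then
            ((l + n - 1).choose (n - 1) : F) * (n.choose r : F) * (-X) ^ l * (-Y) ^ (l + r)
          else 0) := Finset.sum_comm
    _ = _ := by
      refine Finset.sum_congr rfl fun r hr => ?_
      have hrk : r ≤ k := Nat.lt_succ_iff.mp (Finset.mem_range.mp hr)
      refine ((Finset.sum_subset (Finset.range_subset_range.mpr
        (show k - r + 1 ≤ k + 1 by omega)) ?_).symm).trans ?_
      · intro l _ hl
        exact if_neg (by simp only [Finset.mem_range] at hl; omega)
      · refine Finset.sum_congr rfl fun l hl => ?_
        exact if_pos (by simp only [Finset.mem_range] at hl; omega)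

/-- for n ≥ 1, k ≥ 0, the M-triangle of the poset P(n,k), i.e. the sum
`Σ_{a ∈ P(n,k)} (XY)^{ht(a)} (1 - 1/X)^{nz(a)}`, equals
`Σ_{r,ℓ ≥ 0, r+ℓ ≤ k} C(ℓ+n−1, n−1)·C(n, r)·(−X)^ℓ·(−Y)^{ℓ+r}`. -/
theorem M_triangle_tuplesSumLE (F : Type*) [Field F] (X Y : F) (hX : X ≠ 0)
    (n k : ℕ) (hn : 1 ≤ n) :
    ∑ a ∈ tuplesSumLE n k, (X * Y) ^ (∑ i, a i) * (1 - X⁻¹) ^ (nz a) =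
    ∑ r ∈ Finset.range (k + 1), ∑ l ∈ Finset.range (k - r + 1),
      (Nat.choose (l + n - 1) (n - 1) : F) * (Nat.choose n r : F) *
        (-X) ^ l * (-Y) ^ (l + r) := by
  rw [lhs_eq_middle X Y hX n k]
  exact middle_eq_rhs X Y n k hn
end

section
/- The polytope Q_t has no interior lattice point: every lattice point of Q_t lies on the boundary of Q_t. -/
open Finset

/-- An arbor on a finite set `I`: a rooted tree (given by a parent function on a finite
vertex type, with every vertex reaching the root by iterating `parent`) whose vertices
are labeled by pairwise disjoint non-empty subsets of `I` covering `I`. -/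
structure Arbor (I : Type) [Fintype I] [DecidableEq I] where
  V : Type
  [fintypeV : Fintype V]
  [decEqV : DecidableEq V]
  root : V
  parent : V → V
  parent_root : parent root = root
  reaches_root : ∀ v, ∃ n, parent^[n] v = root
  label : V → Finset I
  label_nonempty : ∀ v, (label v).Nonempty
  label_disjoint : ∀ v w, v ≠ w → Disjoint (label v) (label w)
  label_cover : ∀ i, ∃ v, i ∈ label v

attribute [instance] Arbor.fintypeV Arbor.decEqV

variable {I : Type} [Fintype I] [DecidableEq I]

/-- `w` is a descendant of `v` (the path from `w` to the root passes through `v`). -/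
def Arbor.desc (t : Arbor I) (v w : t.V) : Prop := ∃ n, t.parent^[n] w = v

open Classical in
/-- `D(v)`: the union of the labels of all descendants of `v`. -/
noncomputable def Arbor.D (t : Arbor I) (v : t.V) : Finset I :=
  Finset.univ.filter fun i => ∃ w, t.desc v w ∧ i ∈ t.label w

/-- The polytope `Q_t`, defined by `xᵢ ≥ 0` and `Σ_{i ∈ D(v)} xᵢ ≤ |D(v)|`. -/
def Arbor.Q (t : Arbor I) : Set (I → ℝ) :=
  {x | (∀ i, 0 ≤ x i) ∧ ∀ v, ∑ i ∈ t.D v, x i ≤ ((t.D v).card : ℝ)}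

lemma Arbor.D_root (t : Arbor I) : t.D t.root = Finset.univ := by
  classical
  ext i
  simp only [Arbor.D, Finset.mem_filter, Finset.mem_univ, true_and, iff_true]
  obtain ⟨w, hw⟩ := t.label_cover i
  exact ⟨w, t.reaches_root w, hw⟩


/-- the polytope `Q_t` has no interior lattice point: every lattice point
of `Q_t` lies on the boundary (frontier) of `Q_t`. -/
theorem lattice_points_in_frontier (t : Arbor I) (x : I → ℕ)
    (hx : (fun i => (x i : ℝ)) ∈ t.Q) :
    (fun i => (x i : ℝ)) ∈ frontier t.Q := by
  classical
  rw [frontier, Set.mem_diff]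
  refine ⟨subset_closure hx, fun hint => ?_⟩
  obtain ⟨ε, hε, hball⟩ := Metric.mem_nhds_iff.1 (mem_interior_iff_mem_nhds.1 hint)
  by_cases hz : ∃ i, x i = 0
  · obtain ⟨i, hi⟩ := hz
    set y : I → ℝ := Function.update (fun j => (x j : ℝ)) i (-(ε/2)) with hy
    have hyb : y ∈ Metric.ball (fun i => (x i : ℝ)) ε := by
      rw [Metric.mem_ball]
      rw [dist_pi_lt_iff hε]
      intro j
      by_cases hj : j = i
      · subst hj
        simp [hy, Function.update_self, Real.dist_eq, hi]
        rw [abs_of_pos hε]; linarith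
      · simp [hy, Function.update_of_ne hj]
        exact hε
    have := (hball hyb).1 i
    rw [hy, Function.update_self] at this
    linarith
  · push_neg at hz
    have h1 : ∀ i, (1 : ℝ) ≤ x i := fun i => by
      exact_mod_cast Nat.one_le_iff_ne_zero.2 (hz i)
    have hsum : ∑ i : I, (x i : ℝ) ≤ (Fintype.card I : ℝ) := by
      have := hx.2 t.root
      rwa [t.D_root, Finset.card_univ] at this
    obtain ⟨i⟩ : Nonempty I := by
      obtain ⟨i, _⟩ := t.label_nonempty t.root
      exact ⟨i⟩
    set y : I → ℝ := Function.update (fun j => (x j : ℝ)) i ((x i : ℝ) + ε/2) with hy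
    have hyb : y ∈ Metric.ball (fun i => (x i : ℝ)) ε := by
      rw [Metric.mem_ball, dist_pi_lt_iff hε]
      intro j
      by_cases hj : j = i
      · subst hj
        simp [hy, Function.update_self, Real.dist_eq]
        rw [abs_of_pos hε]; linarith
      · simp [hy, Function.update_of_ne hj]
        exact hε
    have hQ := (hball hyb).2 t.root
    rw [t.D_root] at hQ
    have hsy : ∑ j : I, y j = (∑ j : I, (x j : ℝ)) + ε/2 := by
      rw [hy, Finset.sum_update_of_mem (Finset.mem_univ i),
        Finset.sdiff_singleton_eq_erase,
        ← Finset.sum_erase_add Finset.univ _ (Finset.mem_univ i)]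
      ring
    have hge : (Fintype.card I : ℝ) ≤ ∑ j : I, (x j : ℝ) := by
      calc (Fintype.card I : ℝ) = ∑ _j : I, (1:ℝ) := by simp
        _ ≤ ∑ j : I, (x j : ℝ) := Finset.sum_le_sum fun j _ => h1 j
    rw [hsy, Finset.card_univ] at hQ
    linarith
end

section
/- Every point of the Minkowski sum M_t = Σ_v U_v satisfies all defining inequalities of Q_t; that is, M_t ⊆ Q_t. -/
open Finset

variable {I : Type} [Fintype I] [DecidableEq I]

open Classical in
/-- `U(v)`: the union of the labels of all vertices on the path from the root to `v`
(i.e. of all ancestors of `v`, including `v` itself). -/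
noncomputable def Arbor.U (t : Arbor I) (v : t.V) : Finset I :=
  Finset.univ.filter fun i => ∃ w, t.desc w v ∧ i ∈ t.label w

/-- The Minkowski summand `U_v`: the convex hull of the origin and the points
`|v|·eᵢ` for `i ∈ U(v)`. -/
noncomputable def Arbor.Uv (t : Arbor I) (v : t.V) : Set (I → ℝ) :=
  convexHull ℝ
    (insert (0 : I → ℝ)
      {p : I → ℝ | ∃ i ∈ t.U v, p = ((t.label v).card : ℝ) • (Pi.single i (1 : ℝ) : I → ℝ)})

open Pointwise in
/-- The Minkowski sum `M_t = Σ_v U_v` over all vertices of the arbor. -/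
noncomputable def Arbor.M (t : Arbor I) : Set (I → ℝ) := ∑ v : t.V, t.Uv v

section Aux
variable {I : Type} [Fintype I] [DecidableEq I]

lemma Arbor.desc_trans' (t : Arbor I) {v u w : t.V} (h1 : t.desc v u) (h2 : t.desc u w) :
    t.desc v w := by
  obtain ⟨n, hn⟩ := h1
  obtain ⟨m, hm⟩ := h2
  exact ⟨n + m, by rw [Function.iterate_add_apply, hm, hn]⟩

lemma Arbor.eq_of_mem_label (t : Arbor I) {i : I} {a b : t.V} (ha : i ∈ t.label a)
    (hb : i ∈ t.label b) : a = b := by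
  by_contra h
  have := (t.label_disjoint a b h).le_bot (by simp [Finset.mem_inter, ha, hb] : i ∈ t.label a ⊓ t.label b)
  simp at this

/-- The bounding convex set. -/
def Arbor.P (t : Arbor I) (w : t.V) : Set (I → ℝ) :=
  {x | (∀ i, 0 ≤ x i) ∧ (∀ i, i ∉ t.U w → x i = 0) ∧ ∑ i, x i ≤ ((t.label w).card : ℝ)}

lemma Arbor.convex_P (t : Arbor I) (w : t.V) : Convex ℝ (t.P w) := by
  rintro x ⟨hx0, hxs, hxc⟩ y ⟨hy0, hys, hyc⟩ a b ha hb hab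
  refine ⟨fun i => ?_, fun i hi => ?_, ?_⟩
  · have : (a • x + b • y) i = a * x i + b * y i := by simp [mul_comm]
    rw [this]
    exact add_nonneg (mul_nonneg ha (hx0 i)) (mul_nonneg hb (hy0 i))
  · have : (a • x + b • y) i = a * x i + b * y i := by simp [mul_comm]
    rw [this, hxs i hi, hys i hi]; ring
  · have : ∑ i, (a • x + b • y) i = a * ∑ i, x i + b * ∑ i, y i := by
      simp [Finset.sum_add_distrib, Finset.mul_sum, mul_comm]
    rw [this]
    calc a * ∑ i, x i + b * ∑ i, y i
        ≤ a * ((t.label w).card : ℝ) + b * ((t.label w).card : ℝ) := by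
          gcongr
      _ = ((t.label w).card : ℝ) := by rw [← add_mul, hab, one_mul]

lemma Arbor.Uv_subset_P (t : Arbor I) (w : t.V) : t.Uv w ⊆ t.P w := by
  apply convexHull_min _ (t.convex_P w)
  rintro p (rfl | ⟨i, hi, rfl⟩)
  · exact ⟨fun i => le_refl 0, fun i _ => rfl, by simp⟩
  · refine ⟨fun j => ?_, fun j hj => ?_, ?_⟩
    · simp only [Pi.smul_apply, smul_eq_mul]
      refine mul_nonneg (by positivity) ?_
      rcases eq_or_ne j i with rfl | hne
      · simp
      · simp [Pi.single_apply, hne]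
    · have : j ≠ i := fun h => hj (h ▸ hi)
      simp [Pi.single_apply, this]
    · simp [Pi.single_apply, Finset.sum_ite_eq']

end Aux

/-- every point of the Minkowski sum `M_t` satisfies all the defining
inequalities of `Q_t`, i.e. `M_t ⊆ Q_t`. -/
theorem minkowski_subset_Q (t : Arbor I) : t.M ⊆ t.Q := by
  classical
  intro m hm
  rw [Arbor.M, Set.mem_fintype_sum] at hm
  obtain ⟨g, hg, rfl⟩ := hm
  have hgP : ∀ w, g w ∈ t.P w := fun w => t.Uv_subset_P w (hg w)
  constructor
  · intro i
    rw [Finset.sum_apply]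
    exact Finset.sum_nonneg fun w _ => (hgP w).1 i
  · intro v
    -- key: if U(w) meets D(v) then w is a descendant of v
    have key : ∀ w : t.V, ¬ t.desc v w → ∀ i ∈ t.D v, g w i = 0 := by
      intro w hw i hi
      apply (hgP w).2.1
      intro hU
      apply hw
      simp only [Arbor.U, Finset.mem_filter] at hU
      simp only [Arbor.D, Finset.mem_filter] at hi
      obtain ⟨-, a, haw, hia⟩ := hU
      obtain ⟨-, b, hvb, hib⟩ := hi
      have : a = b := t.eq_of_mem_label hia hib
      exact t.desc_trans' hvb (this ▸ haw)
    have hDcard : ((t.D v).card : ℝ)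
        = ∑ w ∈ Finset.univ.filter (fun w => t.desc v w), ((t.label w).card : ℝ) := by
      have hD : t.D v = (Finset.univ.filter (fun w => t.desc v w)).biUnion t.label := by
        ext i
        simp [Arbor.D, Finset.mem_biUnion]
      rw [hD, Finset.card_biUnion]
      · push_cast; rfl
      · intro a _ b _ hab
        exact t.label_disjoint a b hab
    calc ∑ i ∈ t.D v, (∑ w : t.V, g w) i
        = ∑ w : t.V, ∑ i ∈ t.D v, g w i := by
          simp only [Finset.sum_apply]
          rw [Finset.sum_comm]
      _ = ∑ w ∈ Finset.univ.filter (fun w => t.desc v w), ∑ i ∈ t.D v, g w i := by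
          rw [← Finset.sum_filter_add_sum_filter_not Finset.univ (fun w => t.desc v w)]
          have : ∑ w ∈ Finset.univ.filter (fun w => ¬ t.desc v w), ∑ i ∈ t.D v, g w i = 0 := by
            apply Finset.sum_eq_zero
            intro w hw
            apply Finset.sum_eq_zero
            intro i hi
            exact key w (Finset.mem_filter.mp hw).2 i hi
          rw [this, add_zero]
      _ ≤ ∑ w ∈ Finset.univ.filter (fun w => t.desc v w), ((t.label w).card : ℝ) := by
          apply Finset.sum_le_sum
          intro w _
          calc ∑ i ∈ t.D v, g w i ≤ ∑ i, g w i :=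
                Finset.sum_le_sum_of_subset_of_nonneg (Finset.subset_univ _)
                  (fun i _ _ => (hgP w).1 i)
            _ ≤ ((t.label w).card : ℝ) := (hgP w).2.2
      _ = ((t.D v).card : ℝ) := hDcard.symm
end

section
/- The Zeta polynomial of the poset P^F_{m,x,y} of m-subdiagonal lattice paths is Z(u) = ((x − my − 1)(u−1) + 1)/y! · ∏_{j=2}^{y} ((x−1)(u−1) + j). -/
open Finset

set_option maxHeartbeats 1600000

namespace ZPF

/-- prefix sums -/
def S (f : ℕ → ℕ) (t : ℕ) : ℕ := ∑ i ∈ Finset.range t, f i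

lemma S_zero (f : ℕ → ℕ) : S f 0 = 0 := rfl

lemma S_succ (f : ℕ → ℕ) (t : ℕ) : S f (t+1) = S f t + f t := Finset.sum_range_succ f t

lemma S_mono (f : ℕ → ℕ) : Monotone (S f) :=
  monotone_nat_of_le_succ fun t => by simp [S_succ]

/-- the auxiliary walk -/
def phi (M : ℕ) (f : ℕ → ℕ) (t : ℕ) : ℤ := (t : ℤ) - M * S f t

lemma phi_succ_le (M : ℕ) (f : ℕ → ℕ) (t : ℕ) : phi M f (t+1) ≤ phi M f t + 1 := by
  simp only [phi, S_succ]
  push_cast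
  nlinarith [Nat.cast_nonneg (α := ℤ) (f t), Nat.cast_nonneg (α := ℤ) M]

lemma S_period {K y : ℕ} {f : ℕ → ℕ} (hf : ∀ t, f (t + (K+1)) = f t)
    (hsum : S f (K+1) = y) (t : ℕ) : S f (t + (K+1)) = S f t + y := by
  induction t with
  | zero => simpa [S_zero] using hsum
  | succ t ih =>
      have : t + 1 + (K+1) = (t + (K+1)) + 1 := by ring
      rw [this, S_succ, ih, hf, S_succ]
      ring

lemma phi_period {M K y : ℕ} {f : ℕ → ℕ} (hf : ∀ t, f (t + (K+1)) = f t)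
    (hsum : S f (K+1) = y) (t : ℕ) :
    phi M f (t + (K+1)) = phi M f t + ((K+1 : ℤ) - M * y) := by
  simp only [phi, S_period hf hsum t]
  push_cast
  ring

lemma phi_period_mul {M K y : ℕ} {f : ℕ → ℕ} (hf : ∀ t, f (t + (K+1)) = f t)
    (hsum : S f (K+1) = y) (t q : ℕ) :
    phi M f (t + q * (K+1)) = phi M f t + q * ((K+1 : ℤ) - M * y) := by
  induction q with
  | zero => simp
  | succ q ih =>
      have : t + (q+1) * (K+1) = (t + q * (K+1)) + (K+1) := by ring
      rw [this, phi_period hf hsum, ih]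
      push_cast
      ring

theorem cycle_core (M K y : ℕ) (f : ℕ → ℕ) (GoodP : ℕ → Prop) [DecidablePred GoodP]
    (hGoodP : ∀ r, GoodP r ↔ ∀ t ∈ Finset.Icc 1 K, M * (S f (r+t) - S f r) < t)
    (hf : ∀ t, f (t + (K+1)) = f t)
    (hsum : S f (K+1) = y)
    (hMy : M * y ≤ K) :
    ((Finset.range (K+1)).filter GoodP).card = K + 1 - M * y := by
  classical
  have hbr : ((M * y : ℕ) : ℤ) = (M : ℤ) * (y : ℤ) := by push_cast; ring
  have hGpos : (0 : ℤ) < (K+1 : ℤ) - M * y := by push_cast; omega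
  -- minimum of phi over one period is a global minimum
  obtain ⟨s₀, hs₀L, hs₀⟩ := Finset.exists_min_image (Finset.range (K+1)) (phi M f) ⟨0, by simp⟩
  set v₀ : ℤ := phi M f s₀ with hv₀
  have hdecomp : ∀ t : ℕ, t = t % (K+1) + (t / (K+1)) * (K+1) := by
    intro t
    rw [Nat.mul_comm]
    exact (Nat.mod_add_div t (K+1)).symm
  have hmin : ∀ t, v₀ ≤ phi M f t := by
    intro t
    rw [hdecomp t, phi_period_mul hf hsum]
    have h1 : v₀ ≤ phi M f (t % (K+1)) := hs₀ _ (by simpa [Finset.mem_range] using Nat.mod_lt t (Nat.succ_pos K))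
    nlinarith [Nat.cast_nonneg (α := ℤ) (t / (K+1))]
  -- far positions have large phi
  have hbig : ∀ (v : ℤ) (t : ℕ), (K+1) * ((v - v₀).toNat + 1) ≤ t → v < phi M f t := by
    intro v t ht
    have hq : (v - v₀).toNat + 1 ≤ t / (K+1) := by
      have := Nat.div_le_div_right (c := K+1) ht
      rwa [Nat.mul_div_cancel_left _ (by omega : 0 < K+1)] at this
    rw [hdecomp t, phi_period_mul hf hsum]
    have h1 : v₀ ≤ phi M f (t % (K+1)) := hs₀ _ (by simpa [Finset.mem_range] using Nat.mod_lt t (Nat.succ_pos K))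
    have h2 : ((v - v₀).toNat + 1 : ℤ) ≤ (t / (K+1) : ℕ) := by exact_mod_cast hq
    have h3 : v - v₀ ≤ ((v - v₀).toNat : ℤ) := Int.self_le_toNat _
    nlinarith [Nat.cast_nonneg (α := ℤ) (t / (K+1))]
  -- the "last time below level v" function
  set Lst : ℤ → ℕ := fun v =>
    Nat.findGreatest (fun t => phi M f t ≤ v) ((K+1) * ((v - v₀).toNat + 1)) with hLst
  have hspec : ∀ v, v₀ ≤ v → phi M f (Lst v) ≤ v := by
    intro v hv
    refine Nat.findGreatest_spec (P := fun t => phi M f t ≤ v) (m := s₀) ?_ hv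
    calc s₀ ≤ K + 1 := by simp only [Finset.mem_range] at hs₀L; omega
    _ ≤ (K+1) * ((v - v₀).toNat + 1) := Nat.le_mul_of_pos_right _ (by omega)
  have hgt : ∀ v t, Lst v < t → v < phi M f t := by
    intro v t hlt
    by_cases hb : t ≤ (K+1) * ((v - v₀).toNat + 1)
    · have := Nat.findGreatest_is_greatest (P := fun t => phi M f t ≤ v) hlt hb
      omega
    · exact hbig v t (by omega)
  have hle : ∀ v t, phi M f t ≤ v → t ≤ Lst v := by
    intro v t h
    by_contra hc
    exact absurd h (not_le.mpr (hgt v t (by omega)))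
  have hsucc : ∀ v, v₀ ≤ v → Lst v + 1 ≤ Lst (v+1) := by
    intro v hv
    refine hle _ _ ?_
    calc phi M f (Lst v + 1) ≤ phi M f (Lst v) + 1 := phi_succ_le M f _
    _ ≤ v + 1 := by have := hspec v hv; omega
  have hmono : ∀ v w, v₀ ≤ v → v ≤ w → Lst v ≤ Lst w := fun v w hv hvw =>
    hle _ _ (le_trans (hspec v hv) hvw)
  have hstrict : ∀ v w, v₀ ≤ v → v < w → Lst v < Lst w := by
    intro v w hv hvw
    calc Lst v < Lst v + 1 := Nat.lt_succ_self _
    _ ≤ Lst (v+1) := hsucc v hv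
    _ ≤ Lst w := hmono _ _ (by omega) (by omega)
  have hper : ∀ v, v₀ ≤ v → Lst (v + ((K+1) - M * y : ℕ)) = Lst v + (K+1) := by
    intro v hv
    have hcast : (((K+1) - M * y : ℕ) : ℤ) = (K+1 : ℤ) - M * y := by push_cast; omega
    have h1 : Lst v + (K+1) ≤ Lst (v + ((K+1) - M * y : ℕ)) := by
      refine hle _ _ ?_
      rw [phi_period hf hsum]
      have := hspec v hv
      omega
    have h2 : Lst (v + ((K+1) - M * y : ℕ)) ≤ Lst v + (K+1) := by
      by_contra hc
      push_neg at hc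
      have ht1 : Lst v < Lst (v + ((K+1) - M * y : ℕ)) - (K+1) := by omega
      have ht2 : v < phi M f (Lst (v + ((K+1) - M * y : ℕ)) - (K+1)) := hgt _ _ ht1
      have ht3 := phi_period (M := M) hf hsum (Lst (v + ((K+1) - M * y : ℕ)) - (K+1))
      have ht4 : (Lst (v + ((K+1) - M * y : ℕ)) - (K+1)) + (K+1)
          = Lst (v + ((K+1) - M * y : ℕ)) := by omega
      rw [ht4] at ht3
      have ht5 : phi M f (Lst (v + ((K+1) - M * y : ℕ))) ≤ v + ((K+1) - M * y : ℕ) :=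
        hspec _ (by have : (0:ℤ) ≤ (((K+1) - M * y : ℕ) : ℤ) := Nat.cast_nonneg _; omega)
      omega
    omega
  -- records (strict future minima)
  set RecP : ℕ → Prop := fun r => ∀ t, r < t → phi M f r < phi M f t with hRecP
  have hrec_iff : ∀ r, RecP r ↔ Lst (phi M f r) = r := by
    intro r
    constructor
    · intro h
      have h1 : r ≤ Lst (phi M f r) := hle _ _ le_rfl
      have h2 : Lst (phi M f r) ≤ r := by
        by_contra hc
        push_neg at hc
        have := h _ hc
        have := hspec (phi M f r) (hmin r)
        omega
      omega
    · intro h t ht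
      rw [← h] at ht
      exact hgt _ _ ht
  -- records in a window of length K+1 biject with levels in an interval of length (K+1) - M*y
  have hcount : ((Finset.Ioc (Lst v₀) (Lst v₀ + (K+1))).filter RecP).card
      = (K+1) - M * y := by
    have hIc : ((Finset.Ioc v₀ (v₀ + ((K+1) - M * y : ℕ))).card) = (K+1) - M * y := by
      rw [Int.card_Ioc]
      omega
    rw [← hIc]
    refine (Finset.card_bij (fun v _ => Lst v) ?_ ?_ ?_).symm
    · intro v hv
      simp only [Finset.mem_Ioc] at hv
      simp only [Finset.mem_filter, Finset.mem_Ioc]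
      refine ⟨⟨hstrict _ _ le_rfl hv.1, ?_⟩, ?_⟩
      · rw [← hper v₀ le_rfl]
        exact hmono _ _ (by omega) (by omega)
      · rw [hrec_iff]
        have h1 : Lst (phi M f (Lst v)) ≤ Lst v :=
          hmono _ _ (hmin _) (hspec v (by omega))
        have h2 : Lst v ≤ Lst (phi M f (Lst v)) := hle _ _ le_rfl
        omega
    · intro a ha b hb hab
      simp only [Finset.mem_Ioc] at ha hb
      by_contra hne
      rcases lt_or_gt_of_ne hne with h | h
      · exact absurd hab (ne_of_lt (hstrict _ _ (by omega) h))
      · exact absurd hab.symm (ne_of_lt (hstrict _ _ (by omega) h))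
    · intro r hr
      simp only [Finset.mem_filter, Finset.mem_Ioc] at hr
      obtain ⟨⟨hr1, hr2⟩, hr3⟩ := hr
      refine ⟨phi M f r, ?_, ((hrec_iff r).mp hr3)⟩
      simp only [Finset.mem_Ioc]
      constructor
      · by_contra hc
        push_neg at hc
        have : Lst (phi M f r) ≤ Lst v₀ := hmono _ _ (hmin r) hc
        rw [(hrec_iff r).mp hr3] at this
        omega
      · by_contra hc
        push_neg at hc
        have : Lst (v₀ + ((K+1) - M * y : ℕ)) < Lst (phi M f r) :=
          hstrict _ _ (by have : (0:ℤ) ≤ (((K+1) - M * y : ℕ) : ℤ) := Nat.cast_nonneg _; omega) hc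
        rw [(hrec_iff r).mp hr3, hper v₀ le_rfl] at this
        omega
  -- sliding the window
  have hshift : ∀ r, RecP (r + (K+1)) ↔ RecP r := by
    intro r
    constructor
    · intro h t ht
      have h2 := h (t + (K+1)) (by omega)
      rw [phi_period hf hsum, phi_period hf hsum] at h2
      omega
    · intro h t ht
      rcases Nat.lt_or_ge (r + (K+1)) t with h3 | h3
      · have h4 := h (t - (K+1)) (by omega)
        have h5 := phi_period (M := M) hf hsum (t - (K+1))
        have h6 : (t - (K+1)) + (K+1) = t := by omega
        rw [h6] at h5
        rw [phi_period hf hsum]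
        omega
      · omega
  have hslide : ∀ b, ((Finset.Ico b (b + (K+1))).filter RecP).card
      = ((Finset.Ico 0 (K+1)).filter RecP).card := by
    intro b
    induction b with
    | zero => simp
    | succ b ih =>
        rw [← ih]
        rw [Finset.card_filter, Finset.card_filter]
        have e1 : ∑ r ∈ Finset.Ico b (b + (K+1)), (if RecP r then 1 else 0)
            = (if RecP b then 1 else 0)
              + ∑ r ∈ Finset.Ico (b+1) (b + (K+1)), (if RecP r then 1 else 0) :=
          Finset.sum_eq_sum_Ico_succ_bot (by omega) _
        have e2 : ∑ r ∈ Finset.Ico (b+1) (b + 1 + (K+1)), (if RecP r then 1 else 0)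
            = ∑ r ∈ Finset.Ico (b+1) (b + (K+1)), (if RecP r then 1 else 0)
              + (if RecP (b + (K+1)) then 1 else 0) := by
          have h7 : b + 1 + (K+1) = (b + (K+1)) + 1 := by omega
          rw [h7, Finset.sum_Ico_succ_top (by omega)]
        rw [e1, e2]
        have : RecP (b + (K+1)) ↔ RecP b := hshift b
        simp only [this]
        omega
  -- RecP equals the window condition
  have hGoodIff : ∀ r, (∀ t ∈ Finset.Icc 1 K, M * (S f (r+t) - S f r) < t) ↔ RecP r := by
    intro r
    constructor
    · intro h t ht
      set s := (t - r) % (K+1) with hsdef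
      set q := (t - r) / (K+1) with hqdef
      have hdl : t - r = s + q * (K+1) := hdecomp (t - r)
      rcases Nat.eq_zero_or_pos s with hz | hpos
      · have hq : 1 ≤ q := by
          rcases Nat.eq_zero_or_pos q with h0 | h1
          · exfalso; rw [h0, hz] at hdl; simp at hdl; omega
          · exact h1
        have htr : t = r + q * (K+1) := by omega
        rw [htr, phi_period_mul hf hsum]
        have hc : (1 : ℤ) ≤ (q : ℕ) := by exact_mod_cast hq
        nlinarith
      · have hsK : s ≤ K := by
          have := Nat.mod_lt (t - r) (show 0 < K+1 by omega)
          omega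
        have hgood := h s (Finset.mem_Icc.mpr ⟨hpos, hsK⟩)
        have hSle : S f r ≤ S f (r + s) := S_mono f (by omega)
        have h8 : (↑(M * (S f (r + s) - S f r)) : ℤ) < (s : ℤ) := by exact_mod_cast hgood
        rw [Nat.cast_mul, Nat.cast_sub hSle] at h8
        have hphis : phi M f r < phi M f (r + s) := by
          simp only [phi]
          push_cast
          nlinarith
        have htr : t = (r + s) + q * (K+1) := by omega
        rw [htr, phi_period_mul hf hsum]
        have hq0 : (0 : ℤ) ≤ (q : ℤ) * ((K+1 : ℤ) - M * y) :=
          mul_nonneg (Nat.cast_nonneg _) (le_of_lt hGpos)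
        linarith
    · intro h t ht
      simp only [Finset.mem_Icc] at ht
      have hphis := h (r + t) (by omega)
      simp only [phi] at hphis
      have hSle : S f r ≤ S f (r + t) := S_mono f (by omega)
      have hkey : (↑(M * (S f (r + t) - S f r)) : ℤ) < (t : ℤ) := by
        rw [Nat.cast_mul, Nat.cast_sub hSle]
        push_cast at hphis
        nlinarith
      exact_mod_cast hkey
  -- put it together
  have hfilter : ((Finset.range (K+1)).filter GoodP).card
      = ((Finset.range (K+1)).filter RecP).card := by
    rw [Finset.card_filter, Finset.card_filter]
    refine Finset.sum_congr rfl fun r _ => ?_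
    exact if_congr ((hGoodP r).trans (hGoodIff r)) rfl rfl
  rw [hfilter, Finset.range_eq_Ico]
  have h9 := hslide (Lst v₀ + 1)
  have hIoc : Finset.Ico (Lst v₀ + 1) (Lst v₀ + 1 + (K+1))
      = Finset.Ioc (Lst v₀) (Lst v₀ + (K+1)) := by
    ext r
    simp only [Finset.mem_Ico, Finset.mem_Ioc]
    omega
  rw [hIoc] at h9
  rw [← h9, hcount]

-- stars and bars
theorem card_sum_eq (L y : ℕ) :
    Nat.card {f : Fin L → ℕ // ∑ i, f i = y} = (L + y - 1).choose y := by
  have e1 : {f : Fin L → ℕ // ∑ i, f i = y} ≃ {g : Fin L →₀ ℕ // g.sum (fun _ v => v) = y} :=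
    (Finsupp.equivFunOnFinite (α := Fin L) (M := ℕ)).symm.subtypeEquiv (by
      intro f
      rw [Finsupp.sum_fintype]
      · simp [Finsupp.equivFunOnFinite]; exact Iff.rfl
      · intro; rfl)
  have e2 : {g : Fin L →₀ ℕ // g.sum (fun _ v => v) = y} ≃ Sym (Fin L) y :=
    ((Multiset.toFinsupp (α := Fin L)).toEquiv.symm).subtypeEquiv (by
      intro g
      constructor
      · intro h
        rw [← h]
        simpa [Finsupp.sum] using (Finsupp.card_toMultiset g).symm
      · intro h
        rw [← h]
        simpa [Finsupp.sum] using Finsupp.card_toMultiset g)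
  rw [Nat.card_congr (e1.trans e2), Nat.card_eq_fintype_card, Sym.card_sym_eq_choose,
    Fintype.card_fin]
/-- periodic extension of a tuple -/
def ext {K : ℕ} (f : Fin (K+1) → ℕ) (i : ℕ) : ℕ := f ⟨i % (K+1), Nat.mod_lt _ (Nat.succ_pos K)⟩

lemma ext_apply {K : ℕ} (f : Fin (K+1) → ℕ) (i : ℕ) (h : i < K+1) :
    ext f i = f ⟨i, h⟩ := by
  simp only [ext]
  congr 1
  exact Fin.ext (Nat.mod_eq_of_lt h)

lemma ext_period {K : ℕ} (f : Fin (K+1) → ℕ) (t : ℕ) : ext f (t + (K+1)) = ext f t := by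
  simp only [ext]
  congr 2
  exact Nat.add_mod_right t (K+1)

lemma S_ext {K : ℕ} (f : Fin (K+1) → ℕ) : S (ext f) (K+1) = ∑ i, f i := by
  simp only [S]
  rw [← Fin.sum_univ_eq_sum_range (fun i => ext f i) (K+1)]
  exact Finset.sum_congr rfl fun i _ => ext_apply f i i.isLt

/-- rotation of a tuple -/
def rot {K : ℕ} (ρ : Fin (K+1)) (f : Fin (K+1) → ℕ) : Fin (K+1) → ℕ := fun k => f (k + ρ)

lemma rot_rot {K : ℕ} (ρ : Fin (K+1)) (f : Fin (K+1) → ℕ) : rot (-ρ) (rot ρ f) = f := by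
  funext k
  simp [rot, sub_add_cancel]

lemma rot_rot' {K : ℕ} (ρ : Fin (K+1)) (f : Fin (K+1) → ℕ) : rot ρ (rot (-ρ) f) = f := by
  funext k
  simp [rot]

lemma sum_rot {K : ℕ} (ρ : Fin (K+1)) (f : Fin (K+1) → ℕ) : ∑ k, rot ρ f k = ∑ k, f k :=
  Fintype.sum_equiv (Equiv.addRight ρ) _ _ (fun k => rfl)

lemma ext_rot {K : ℕ} (ρ : Fin (K+1)) (f : Fin (K+1) → ℕ) (i : ℕ) :
    ext (rot ρ f) i = ext f (i + ρ.val) := by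
  simp only [ext, rot]
  congr 1
  rw [Fin.add_def]
  apply Fin.ext
  exact Nat.mod_add_mod i (K+1) ρ.val

lemma S_zero' (f : ℕ → ℕ) : S f 0 = 0 := rfl
lemma S_succ' (f : ℕ → ℕ) (t : ℕ) : S f (t+1) = S f t + f t := Finset.sum_range_succ f t

lemma S_rot_add {K : ℕ} (ρ : Fin (K+1)) (f : Fin (K+1) → ℕ) (t : ℕ) :
    S (ext f) (ρ.val + t) = S (ext f) ρ.val + S (ext (rot ρ f)) t := by
  induction t with
  | zero => simp [S_zero']
  | succ t ih =>
      have h1 : ρ.val + (t + 1) = (ρ.val + t) + 1 := by omega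
      rw [h1, S_succ', ih, S_succ', ext_rot]
      have h2 : t + ρ.val = ρ.val + t := by omega
      rw [h2]
      ring

/-- the window-goodness predicate -/
def GoodW {K : ℕ} (M : ℕ) (r : ℕ) (f : Fin (K+1) → ℕ) : Prop :=
  ∀ t ∈ Finset.Icc 1 K, M * (S (ext f) (r+t) - S (ext f) r) < t

theorem count_words (M K y : ℕ) (hMy : M * y ≤ K) :
    Nat.card {f : Fin (K+1) → ℕ // ∑ i, f i = y ∧
        ∀ t ∈ Finset.Icc 1 K, M * S (ext f) t < t} * (K+1)
      = ((K+1) - M*y) * ((K + y).choose y) := by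
  classical
  set T : Finset (Fin (K+1) → ℕ) :=
    (Fintype.piFinset fun _ : Fin (K+1) => Finset.range (y+1)).filter
      (fun f => ∑ i, f i = y) with hT
  have hmemT : ∀ f : Fin (K+1) → ℕ, f ∈ T ↔ ∑ i, f i = y := by
    intro f
    simp only [hT, Finset.mem_filter, Fintype.mem_piFinset, Finset.mem_range]
    constructor
    · exact fun h => h.2
    · intro h
      refine ⟨fun a => ?_, h⟩
      have := Finset.single_le_sum (f := f) (fun i _ => Nat.zero_le _) (Finset.mem_univ a)
      omega
  have hTcard : T.card = (K + y).choose y := by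
    rw [← Nat.card_eq_finsetCard]
    have e : {f // f ∈ T} ≃ {f : Fin (K+1) → ℕ // ∑ i, f i = y} :=
      Equiv.subtypeEquivRight hmemT
    rw [Nat.card_congr e, card_sum_eq]
    congr 1
    omega
  have hrotT : ∀ (ρ : Fin (K+1)) (f : Fin (K+1) → ℕ), f ∈ T → rot ρ f ∈ T := by
    intro ρ f hf
    rw [hmemT] at hf ⊢
    rw [sum_rot, hf]
  have hGoodRot : ∀ (ρ : Fin (K+1)) (f : Fin (K+1) → ℕ),
      GoodW M ρ.val f ↔ GoodW M 0 (rot ρ f) := by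
    intro ρ f
    unfold GoodW
    apply forall_congr'
    intro t
    apply imp_congr Iff.rfl
    have h := S_rot_add ρ f t
    have h0 : S (ext (rot ρ f)) 0 = 0 := S_zero' _
    have hsub2 : S (ext f) (ρ.val + t) - S (ext f) ρ.val = S (ext (rot ρ f)) t := by omega
    rw [hsub2, zero_add, h0, Nat.sub_zero]
  have hfilterRot : ∀ ρ : Fin (K+1),
      (T.filter (fun f => GoodW M ρ.val f)).card = (T.filter (fun f => GoodW M 0 f)).card := by
    intro ρ
    refine Finset.card_bij' (fun f _ => rot ρ f) (fun g _ => rot (-ρ) g) ?_ ?_ ?_ ?_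
    · intro f hf
      simp only [Finset.mem_filter] at hf ⊢
      exact ⟨hrotT ρ f hf.1, (hGoodRot ρ f).mp hf.2⟩
    · intro g hg
      simp only [Finset.mem_filter] at hg ⊢
      refine ⟨hrotT (-ρ) g hg.1, ?_⟩
      have := (hGoodRot ρ (rot (-ρ) g)).mpr
      rw [rot_rot'] at this
      exact this hg.2
    · intro f hf
      exact rot_rot ρ f
    · intro g hg
      exact rot_rot' ρ g
  have hrow : ∀ f ∈ T, ((Finset.range (K+1)).filter (fun r => GoodW M r f)).card
      = K + 1 - M * y := by
    intro f hf
    exact cycle_core M K y (ext f) (fun r => GoodW M r f) (fun r => Iff.rfl)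
      (ext_period f) ((S_ext f).trans ((hmemT f).mp hf)) hMy
  have hdouble : (K+1) * (T.filter (fun f => GoodW M 0 f)).card
      = T.card * (K + 1 - M * y) := by
    calc (K+1) * (T.filter (fun f => GoodW M 0 f)).card
        = ∑ _ρ : Fin (K+1), (T.filter (fun f => GoodW M 0 f)).card := by
          rw [Finset.sum_const, Finset.card_univ, Fintype.card_fin, smul_eq_mul]
      _ = ∑ ρ : Fin (K+1), (T.filter (fun f => GoodW M ρ.val f)).card := by
          exact Finset.sum_congr rfl fun ρ _ => (hfilterRot ρ).symm
      _ = ∑ ρ : Fin (K+1), ∑ f ∈ T, (if GoodW M ρ.val f then 1 else 0) := by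
          exact Finset.sum_congr rfl fun ρ _ => Finset.card_filter _ _
      _ = ∑ f ∈ T, ∑ ρ : Fin (K+1), (if GoodW M ρ.val f then 1 else 0) := Finset.sum_comm
      _ = ∑ f ∈ T, ∑ r ∈ Finset.range (K+1), (if GoodW M r f then 1 else 0) := by
          refine Finset.sum_congr rfl fun f _ => ?_
          exact Fin.sum_univ_eq_sum_range (fun r => if GoodW M r f then 1 else 0) (K+1)
      _ = ∑ f ∈ T, ((Finset.range (K+1)).filter (fun r => GoodW M r f)).card := by
          exact Finset.sum_congr rfl fun f _ => (Finset.card_filter _ _).symm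
      _ = ∑ _f ∈ T, (K + 1 - M * y) := Finset.sum_congr rfl hrow
      _ = T.card * (K + 1 - M * y) := by rw [Finset.sum_const, smul_eq_mul]
  have hsub : Nat.card {f : Fin (K+1) → ℕ // ∑ i, f i = y ∧
      ∀ t ∈ Finset.Icc 1 K, M * S (ext f) t < t}
      = (T.filter (fun f => GoodW M 0 f)).card := by
    rw [← Nat.card_eq_finsetCard]
    apply Nat.card_congr
    apply Equiv.subtypeEquivRight
    intro f
    simp only [Finset.mem_filter, hmemT]
    unfold GoodW
    constructor
    · rintro ⟨h1, h2⟩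
      refine ⟨h1, fun t ht => ?_⟩
      rw [zero_add, S_zero', Nat.sub_zero]
      exact h2 t ht
    · rintro ⟨h1, h2⟩
      refine ⟨h1, fun t ht => ?_⟩
      have := h2 t ht
      rw [zero_add, S_zero', Nat.sub_zero] at this
      exact this
  rw [hsub, Nat.mul_comm, hdouble, hTcard, Nat.mul_comm]
lemma S_add (f : ℕ → ℕ) (a b : ℕ) :
    S f (a + b) = S f a + ∑ t ∈ Finset.range b, f (a + t) := by
  induction b with
  | zero => simp [S]
  | succ b ih =>
      have h1 : a + (b+1) = (a+b) + 1 := by omega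
      rw [h1, S, Finset.sum_range_succ, ← S, ih, Finset.sum_range_succ]
      omega

section CumSum

variable {N' : ℕ}

/-- cumulative sums over `Fin (N'+1)` -/
def Ps (d : Fin (N'+1) → ℕ) (s : Fin (N'+1)) : ℕ := ∑ t ∈ Finset.Iic s, d t

lemma Ps_zero (d : Fin (N'+1) → ℕ) (h : 0 < N'+1) : Ps d ⟨0, h⟩ = d ⟨0, h⟩ := by
  simp only [Ps]
  rw [show Finset.Iic (⟨0,h⟩ : Fin (N'+1)) = {⟨0,h⟩} from by
    ext t; simp only [Finset.mem_Iic, Finset.mem_singleton, Fin.le_def, Fin.ext_iff]; try omega]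
  simp

lemma Ps_succ (d : Fin (N'+1) → ℕ) (v : ℕ) (h : v+1 < N'+1) :
    Ps d ⟨v+1, h⟩ = Ps d ⟨v, by omega⟩ + d ⟨v+1, h⟩ := by
  simp only [Ps]
  rw [show Finset.Iic (⟨v+1,h⟩ : Fin (N'+1))
      = insert ⟨v+1,h⟩ (Finset.Iic (⟨v, by omega⟩ : Fin (N'+1))) from by
    ext t; simp [Finset.mem_Iic, Fin.le_def, Fin.ext_iff]; try omega]
  rw [Finset.sum_insert (by simp [Finset.mem_Iic, Fin.le_def]; try omega)]
  omega

lemma Ps_inj {d d' : Fin (N'+1) → ℕ} (h : ∀ s, Ps d s = Ps d' s) : d = d' := by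
  funext t
  obtain ⟨v, hv⟩ := t
  cases v with
  | zero => have := h ⟨0, hv⟩; rwa [Ps_zero, Ps_zero] at this
  | succ v =>
      have h1 := h ⟨v+1, hv⟩
      have h2 := h ⟨v, by omega⟩
      rw [Ps_succ, Ps_succ] at h1
      omega

/-- difference operator -/
def diffF (g : Fin (N'+1) → ℕ) (t : Fin (N'+1)) : ℕ :=
  g t - (if h : t.val = 0 then 0 else g ⟨t.val - 1, by omega⟩)

lemma Ps_diffF (g : Fin (N'+1) → ℕ)
    (hg : ∀ (v : ℕ) (h : v+1 < N'+1), g ⟨v, by omega⟩ ≤ g ⟨v+1, h⟩) :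
    ∀ s, Ps (diffF g) s = g s := by
  intro s
  obtain ⟨v, hv⟩ := s
  induction v with
  | zero =>
      rw [Ps_zero]
      simp [diffF]
  | succ v ih =>
      rw [Ps_succ, ih (by omega)]
      have h1 : diffF g ⟨v+1, hv⟩ = g ⟨v+1, hv⟩ - g ⟨v, by omega⟩ := by
        simp only [diffF]
        norm_num
      have h2 := hg v hv
      omega

lemma diffF_Ps (d : Fin (N'+1) → ℕ) : diffF (Ps d) = d := by
  apply Ps_inj
  intro s
  apply Ps_diffF
  intro v h
  rw [Ps_succ]
  omega

end CumSum

section Reduce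

variable {m n N' y : ℕ}

/-- the chain condition -/
def Q (m y : ℕ) {n : ℕ} (A : Fin n → ℕ) : Prop :=
  (∀ j : Fin n, m * ∑ i ∈ Finset.Iic j, A i < (j:ℕ) + 1) ∧ ∑ i, A i ≤ y

/-- Step A: the chain condition can be checked at the top element only -/
def equivA (m y : ℕ) (n N' : ℕ) :
    {c : Fin (N'+1) → (Fin n → ℕ) // Monotone c ∧ ∀ s, Q m y (c s)}
      ≃ {c : Fin (N'+1) → (Fin n → ℕ) // Monotone c ∧ Q m y (c (Fin.last N'))} :=
  Equiv.subtypeEquivRight (by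
    intro c
    constructor
    · rintro ⟨hmono, hall⟩
      exact ⟨hmono, hall _⟩
    · rintro ⟨hmono, htop⟩
      refine ⟨hmono, fun s => ⟨fun j => ?_, ?_⟩⟩
      · calc m * ∑ i ∈ Finset.Iic j, c s i
            ≤ m * ∑ i ∈ Finset.Iic j, c (Fin.last N') i := by
              apply Nat.mul_le_mul_left
              exact Finset.sum_le_sum fun i _ => hmono (Fin.le_last s) i
        _ < (j:ℕ) + 1 := htop.1 j
      · calc ∑ i, c s i ≤ ∑ i, c (Fin.last N') i :=
              Finset.sum_le_sum fun i _ => hmono (Fin.le_last s) i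
        _ ≤ y := htop.2)

/-- Step B: monotone chains with top condition are cumulative sums of matrices -/
def equivB (m y : ℕ) (n N' : ℕ) :
    {d : Fin (N'+1) → Fin n → ℕ // Q m y (fun i => ∑ t, d t i)}
      ≃ {c : Fin (N'+1) → (Fin n → ℕ) // Monotone c ∧ Q m y (c (Fin.last N'))} where
  toFun := fun ⟨d, hd⟩ => ⟨fun s i => Ps (fun t => d t i) s,
    by
      constructor
      · intro a b hab i
        exact Finset.sum_le_sum_of_subset (Finset.Iic_subset_Iic.mpr hab)
      · have hlast : ∀ i, Ps (fun t => d t i) (Fin.last N') = ∑ t, d t i := by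
          intro i
          simp only [Ps]
          apply Finset.sum_congr _ (fun _ _ => rfl)
          ext t
          simp [Finset.mem_Iic, Fin.le_last]
        show Q m y (fun i => Ps (fun t => d t i) (Fin.last N'))
        have he : (fun i => Ps (fun t => d t i) (Fin.last N')) = fun i => ∑ t, d t i := by
          funext i; exact hlast i
        rw [he]
        exact hd⟩
  invFun := fun ⟨c, hmono, hc⟩ => ⟨fun t i => diffF (fun s => c s i) t,
    by
      have hps : ∀ i s, Ps (fun t => diffF (fun s' => c s' i) t) s = c s i := by
        intro i s
        apply Ps_diffF
        intro v h
        exact hmono (by simp [Fin.le_def]) i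
      show Q m y (fun i => ∑ t, diffF (fun s' => c s' i) t)
      have htot : (fun i => ∑ t, diffF (fun s' => c s' i) t) = c (Fin.last N') := by
        funext i
        rw [show (∑ t, diffF (fun s' => c s' i) t)
            = Ps (fun t => diffF (fun s' => c s' i) t) (Fin.last N') from by
          simp only [Ps]
          apply (Finset.sum_congr _ (fun _ _ => rfl)).symm
          ext t
          simp [Finset.mem_Iic, Fin.le_last]]
        exact hps i (Fin.last N')
      rw [htot]
      exact hc⟩
  left_inv := by
    rintro ⟨d, hd⟩
    apply Subtype.ext
    funext t i
    have := congrFun (diffF_Ps (fun t' => d t' i)) t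
    simpa using this
  right_inv := by
    rintro ⟨c, hmono, hc⟩
    apply Subtype.ext
    funext s i
    show Ps (fun t => diffF (fun s' => c s' i) t) s = c s i
    apply Ps_diffF
    intro v h
    exact hmono (by simp [Fin.le_def]) i

end Reduce

section Flatten

variable (m n N' y : ℕ)

/-- flattening a matrix into a word (column-major), with an appended slack coordinate -/
def mk (d : Fin (N'+1) → Fin n → ℕ) : Fin (n*(N'+1)+1) → ℕ := fun k =>
  if h : k.val < n*(N'+1) then
    d ⟨k.val % (N'+1), Nat.mod_lt _ (Nat.succ_pos _)⟩
      ⟨k.val / (N'+1), by rw [Nat.div_lt_iff_lt_mul (Nat.succ_pos N')]; exact h⟩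
  else y - ∑ i, ∑ t, d t i

lemma unmk_bound (t : Fin (N'+1)) (i : Fin n) : t.val + i.val*(N'+1) < n*(N'+1)+1 := by
  have h1 := t.isLt
  have h2 : i.val + 1 ≤ n := i.isLt
  have h3 : (i.val + 1) * (N'+1) ≤ n * (N'+1) := Nat.mul_le_mul_right _ h2
  have h4 : (i.val + 1) * (N'+1) = i.val * (N'+1) + (N'+1) := by ring
  omega

/-- the inverse: reading off matrix entries from a word -/
def unmk (f : Fin (n*(N'+1)+1) → ℕ) : Fin (N'+1) → Fin n → ℕ := fun t i =>
  f ⟨t.val + i.val*(N'+1), unmk_bound n N' t i⟩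

lemma unmk_lt (t : Fin (N'+1)) (i : Fin n) : t.val + i.val*(N'+1) < n*(N'+1) := by
  have h1 := t.isLt
  have h2 : i.val + 1 ≤ n := i.isLt
  have h3 : (i.val + 1) * (N'+1) ≤ n * (N'+1) := Nat.mul_le_mul_right _ h2
  have h4 : (i.val + 1) * (N'+1) = i.val * (N'+1) + (N'+1) := by ring
  omega

lemma mk_block (d : Fin (N'+1) → Fin n → ℕ) (t : Fin (N'+1)) (i : Fin n) :
    mk n N' y d ⟨t.val + i.val*(N'+1), unmk_bound n N' t i⟩ = d t i := by
  rw [mk, dif_pos (unmk_lt n N' t i)]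
  congr 1
  · apply Fin.ext
    show (t.val + i.val*(N'+1)) % (N'+1) = t.val
    rw [Nat.add_mul_mod_self_right]
    exact Nat.mod_eq_of_lt t.isLt
  · apply Fin.ext
    show (t.val + i.val*(N'+1)) / (N'+1) = i.val
    rw [Nat.add_mul_div_right _ _ (Nat.succ_pos N')]
    rw [Nat.div_eq_of_lt t.isLt]
    exact Nat.zero_add _

lemma unmk_mk (d : Fin (N'+1) → Fin n → ℕ) : unmk n N' (mk n N' y d) = d := by
  funext t i
  exact mk_block n N' y d t i

lemma mk_ext_block (d : Fin (N'+1) → Fin n → ℕ) (tv jv : ℕ) (ht : tv < N'+1) (hj : jv < n) :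
    ext (mk n N' y d) (tv + jv*(N'+1)) = d ⟨tv, ht⟩ ⟨jv, hj⟩ := by
  rw [ext_apply _ _ (unmk_bound n N' ⟨tv, ht⟩ ⟨jv, hj⟩)]
  exact mk_block n N' y d ⟨tv, ht⟩ ⟨jv, hj⟩

lemma flat_prefix (d : Fin (N'+1) → Fin n → ℕ) :
    ∀ jv, jv ≤ n → S (ext (mk n N' y d)) (jv*(N'+1))
      = ∑ i ∈ Finset.univ.filter (fun i : Fin n => i.val < jv), ∑ t, d t i := by
  intro jv
  induction jv with
  | zero => simp [S]
  | succ jv ih =>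
      intro hj
      have h1 : (jv+1)*(N'+1) = jv*(N'+1) + (N'+1) := by ring
      rw [h1, S_add, ih (by omega)]
      have h2 : ∑ t ∈ Finset.range (N'+1), ext (mk n N' y d) (jv*(N'+1) + t)
          = ∑ t, d t ⟨jv, by omega⟩ := by
        rw [← Fin.sum_univ_eq_sum_range (fun tv => ext (mk n N' y d) (jv*(N'+1) + tv)) (N'+1)]
        apply Finset.sum_congr rfl
        intro t _
        have h3 : jv*(N'+1) + t.val = t.val + jv*(N'+1) := by omega
        rw [h3, mk_ext_block n N' y d t.val jv t.isLt (by omega)]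
      rw [h2]
      have h4 : Finset.univ.filter (fun i : Fin n => i.val < jv + 1)
          = insert ⟨jv, by omega⟩ (Finset.univ.filter (fun i : Fin n => i.val < jv)) := by
        ext i
        simp [Fin.ext_iff]
        omega
      rw [h4, Finset.sum_insert (by simp)]
      omega

lemma flat_total (d : Fin (N'+1) → Fin n → ℕ) :
    S (ext (mk n N' y d)) (n*(N'+1)) = ∑ i, ∑ t, d t i := by
  rw [flat_prefix n N' y d n le_rfl]
  apply Finset.sum_congr _ (fun _ _ => rfl)
  ext i
  simp [i.isLt]

lemma sum_univ_ext {K : ℕ} (f : Fin (K+1) → ℕ) : ∑ i, f i = S (ext f) (K+1) :=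
  (S_ext f).symm

lemma mk_last (d : Fin (N'+1) → Fin n → ℕ) :
    ext (mk n N' y d) (n*(N'+1)) = y - ∑ i, ∑ t, d t i := by
  rw [ext_apply _ _ (Nat.lt_succ_self _)]
  rw [mk, dif_neg (Nat.lt_irrefl _)]

lemma mk_sum (d : Fin (N'+1) → Fin n → ℕ) (hd : ∑ i, ∑ t, d t i ≤ y) :
    ∑ k, mk n N' y d k = y := by
  rw [sum_univ_ext]
  show (∑ k ∈ Finset.range (n*(N'+1)+1), ext (mk n N' y d) k) = y
  rw [Finset.sum_range_succ]
  have h1 : (∑ k ∈ Finset.range (n*(N'+1)), ext (mk n N' y d) k)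
      = S (ext (mk n N' y d)) (n*(N'+1)) := rfl
  rw [h1, flat_total n N' y d, mk_last n N' y d]
  omega

end Flatten

section Equivs

variable {m n N' y : ℕ}

lemma S_mono' (g : ℕ → ℕ) {a b : ℕ} (h : a ≤ b) : S g a ≤ S g b :=
  Finset.sum_le_sum_of_subset (Finset.range_subset_range.mpr h)

lemma ext_mk_unmk (f : Fin (n*(N'+1)+1) → ℕ) (kv : ℕ) (h : kv < n*(N'+1)) :
    ext (mk n N' y (unmk n N' f)) kv = ext f kv := by
  rw [ext_apply _ _ (by omega), ext_apply _ _ (by omega)]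
  rw [mk, dif_pos h]
  show f _ = _
  congr 1
  apply Fin.ext
  show kv % (N'+1) + (kv / (N'+1)) * (N'+1) = kv
  exact Nat.mod_add_div' kv (N'+1)

lemma S_ext_mk_unmk (f : Fin (n*(N'+1)+1) → ℕ) (t : ℕ) (ht : t ≤ n*(N'+1)) :
    S (ext (mk n N' y (unmk n N' f))) t = S (ext f) t := by
  apply Finset.sum_congr rfl
  intro k hk
  simp only [Finset.mem_range] at hk
  exact ext_mk_unmk f k (by omega)

lemma Iic_filter (j : Fin n) :
    Finset.Iic j = Finset.univ.filter (fun i : Fin n => i.val < j.val + 1) := by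
  ext i
  simp only [Finset.mem_Iic, Fin.le_def, Finset.mem_filter, Finset.mem_univ, true_and]
  omega

/-- Step C: matrices correspond to words with block conditions -/
def equivC (m y n N' : ℕ) :
    {d : Fin (N'+1) → Fin n → ℕ // Q m y (fun i => ∑ t, d t i)}
      ≃ {f : Fin (n*(N'+1)+1) → ℕ // ∑ i, f i = y ∧
          ∀ j : Fin n, m * S (ext f) ((j.val+1)*(N'+1)) < j.val + 1} where
  toFun := fun ⟨d, hd⟩ => ⟨mk n N' y d, by
    obtain ⟨hd1, hd2⟩ := hd
    have hsum : ∑ i, ∑ t, d t i ≤ y := by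
      calc ∑ i, ∑ t, d t i = ∑ i, (fun i' => ∑ t, d t i') i := rfl
      _ ≤ y := hd2
    refine ⟨mk_sum n N' y d hsum, fun j => ?_⟩
    rw [flat_prefix n N' y d (j.val+1) j.isLt]
    have := hd1 j
    rw [Iic_filter] at this
    exact this⟩
  invFun := fun fp => ⟨unmk n N' fp.1, by
    obtain ⟨f, hf1, hf2⟩ := fp
    constructor
    · intro j
      rw [Iic_filter]
      have h1 : (∑ i ∈ Finset.univ.filter (fun i : Fin n => i.val < j.val+1),
          (fun i' => ∑ t, unmk n N' f t i') i) = S (ext f) ((j.val+1)*(N'+1)) := by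
        rw [← flat_prefix n N' y (unmk n N' f) (j.val+1) j.isLt]
        exact (S_ext_mk_unmk (y := y) f ((j.val+1)*(N'+1)) (Nat.mul_le_mul_right _ j.isLt))
      rw [h1]
      exact hf2 j
    · have h2 : (∑ i, (fun i' => ∑ t, unmk n N' f t i') i) = S (ext f) (n*(N'+1)) := by
        rw [← flat_total n N' y (unmk n N' f)]
        exact (S_ext_mk_unmk (y := y) f (n*(N'+1)) le_rfl)
      rw [h2, ← hf1, sum_univ_ext f]
      exact S_mono' _ (Nat.le_succ _)⟩
  left_inv := by
    rintro ⟨d, hd⟩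
    apply Subtype.ext
    show unmk n N' (mk n N' y d) = d
    exact unmk_mk n N' y d
  right_inv := by
    rintro ⟨f, hf1, hf2⟩
    apply Subtype.ext
    funext k
    show mk n N' y (unmk n N' f) k = f k
    rcases Nat.lt_or_ge k.val (n*(N'+1)) with h | h
    · calc mk n N' y (unmk n N' f) k
          = ext (mk n N' y (unmk n N' f)) k.val := (ext_apply _ _ k.isLt).symm
        _ = ext f k.val := ext_mk_unmk f k.val h
        _ = f k := ext_apply f k.val k.isLt
    · have hk : k.val = n*(N'+1) := by have := k.isLt; omega
      have hks : k = ⟨n*(N'+1), Nat.lt_succ_self _⟩ := Fin.ext hk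
      rw [hks]
      have hlast : mk n N' y (unmk n N' f) ⟨n*(N'+1), Nat.lt_succ_self _⟩
          = y - ∑ i, ∑ t, unmk n N' f t i := by
        rw [mk, dif_neg (Nat.lt_irrefl _)]
      rw [hlast]
      have h2 : ∑ i, ∑ t, unmk n N' f t i = S (ext f) (n*(N'+1)) := by
        rw [← flat_total n N' y (unmk n N' f)]
        exact (S_ext_mk_unmk (y := y) f (n*(N'+1)) le_rfl)
      have h3 : ∑ i, f i = S (ext f) (n*(N'+1)) + f ⟨n*(N'+1), Nat.lt_succ_self _⟩ := by
        rw [sum_univ_ext f]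
        show S (ext f) (n*(N'+1)+1) = _
        have h4 : S (ext f) (n*(N'+1)+1) = S (ext f) (n*(N'+1)) + ext f (n*(N'+1)) :=
          Finset.sum_range_succ _ _
        rw [h4, ext_apply _ _ (Nat.lt_succ_self _)]
      rw [h2]
      omega

/-- Step D: block conditions are equivalent to all-prefix conditions -/
lemma block_iff (m y n N' : ℕ) (f : Fin (n*(N'+1)+1) → ℕ) :
    (∀ j : Fin n, m * S (ext f) ((j.val+1)*(N'+1)) < j.val + 1)
      ↔ ∀ t ∈ Finset.Icc 1 (n*(N'+1)), (m*(N'+1)) * S (ext f) t < t := by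
  constructor
  · intro h t ht
    simp only [Finset.mem_Icc] at ht
    obtain ⟨ht1, ht2⟩ := ht
    have hj : (t-1)/(N'+1) < n := by
      rw [Nat.div_lt_iff_lt_mul (show 0 < N'+1 by omega)]
      omega
    have h1 : ((t-1)/(N'+1))*(N'+1) ≤ t-1 := Nat.div_mul_le_self _ _
    have hdec : (t-1) % (N'+1) + ((t-1)/(N'+1))*(N'+1) = t-1 := Nat.mod_add_div' _ _
    have hmod : (t-1) % (N'+1) < N'+1 := Nat.mod_lt _ (show 0 < N'+1 by omega)
    have hexp : ((t-1)/(N'+1)+1)*(N'+1) = ((t-1)/(N'+1))*(N'+1) + (N'+1) := by ring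
    have h2 : t ≤ ((t-1)/(N'+1)+1)*(N'+1) := by omega
    have hS : S (ext f) t ≤ S (ext f) (((t-1)/(N'+1)+1)*(N'+1)) := S_mono' _ h2
    have hj' := h ⟨(t-1)/(N'+1), hj⟩
    simp only at hj'
    have h3 : m * S (ext f) t ≤ (t-1)/(N'+1) := by
      have := Nat.mul_le_mul_left m hS
      omega
    have h4 : (m * S (ext f) t) * (N'+1) ≤ ((t-1)/(N'+1)) * (N'+1) :=
      Nat.mul_le_mul_right _ h3
    have h5 : (m*(N'+1)) * S (ext f) t = (m * S (ext f) t) * (N'+1) := by ring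
    omega
  · intro h j
    have hmem : (j.val+1)*(N'+1) ∈ Finset.Icc 1 (n*(N'+1)) := by
      simp only [Finset.mem_Icc]
      constructor
      · have : 1*1 ≤ (j.val+1)*(N'+1) := Nat.mul_le_mul (by omega) (by omega)
        omega
      · exact Nat.mul_le_mul_right _ j.isLt
    have := h _ hmem
    have h5 : (m*(N'+1)) * S (ext f) ((j.val+1)*(N'+1))
        = (m * S (ext f) ((j.val+1)*(N'+1))) * (N'+1) := by ring
    rw [h5] at this
    exact Nat.lt_of_mul_lt_mul_right this

theorem chain_count (m y n N' : ℕ) :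
    Nat.card {c : Fin (N'+1) → (Fin n → ℕ) //
      Monotone c ∧ ∀ s, (∀ j : Fin n, m * ∑ i ∈ Finset.Iic j, c s i < (j:ℕ) + 1) ∧
        ∑ i, c s i ≤ y}
    = Nat.card {f : Fin (n*(N'+1)+1) → ℕ // ∑ i, f i = y ∧
        ∀ t ∈ Finset.Icc 1 (n*(N'+1)), (m*(N'+1)) * S (ext f) t < t} := by
  have e1 : {c : Fin (N'+1) → (Fin n → ℕ) //
      Monotone c ∧ ∀ s, (∀ j : Fin n, m * ∑ i ∈ Finset.Iic j, c s i < (j:ℕ) + 1) ∧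
        ∑ i, c s i ≤ y}
      ≃ {c : Fin (N'+1) → (Fin n → ℕ) // Monotone c ∧ ∀ s, Q m y (c s)} :=
    Equiv.subtypeEquivRight (fun c => Iff.rfl)
  have e2 := (equivA m y n N').trans (equivB m y n N').symm
  have e3 := equivC m y n N'
  have e4 : {f : Fin (n*(N'+1)+1) → ℕ // ∑ i, f i = y ∧
        ∀ j : Fin n, m * S (ext f) ((j.val+1)*(N'+1)) < j.val + 1}
      ≃ {f : Fin (n*(N'+1)+1) → ℕ // ∑ i, f i = y ∧
        ∀ t ∈ Finset.Icc 1 (n*(N'+1)), (m*(N'+1)) * S (ext f) t < t} :=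
    Equiv.subtypeEquivRight (fun f => and_congr_right fun _ => block_iff m y n N' f)
  exact Nat.card_congr (((e1.trans e2).trans e3).trans e4)

end Equivs

lemma fact_mul_choose (K y : ℕ) :
    y.factorial * (K + y).choose y = ∏ j ∈ Finset.Icc 1 y, (K + j) := by
  have h1 : ∀ z, K.factorial * ∏ j ∈ Finset.Icc 1 z, (K + j) = (K + z).factorial := by
    intro z
    induction z with
    | zero => simp
    | succ z ih =>
        rw [Finset.prod_Icc_succ_top (Nat.le_add_left 1 z)]
        have h2 : K + (z+1) = (K + z) + 1 := by omega
        rw [h2, Nat.factorial_succ, ← ih]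
        ring
  apply Nat.eq_of_mul_eq_mul_left (Nat.factorial_pos K)
  rw [h1 y]
  have h3 := Nat.choose_mul_factorial_mul_factorial (Nat.le_add_left y K)
  have h4 : K + y - y = K := by omega
  rw [h4] at h3
  calc K.factorial * (y.factorial * (K + y).choose y)
      = (K + y).choose y * y.factorial * K.factorial := by ring
    _ = (K + y).factorial := h3

lemma final_alg (K My Z y : ℕ) (hy : 0 < y)
    (hcw : Z * (K+1) = (K + 1 - My) * (K + y).choose y) :
    y.factorial * Z = (K + 1 - My) * ∏ j ∈ Finset.Icc 2 y, (K + j) := by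
  apply Nat.eq_of_mul_eq_mul_right (show 0 < K + 1 from Nat.succ_pos K)
  have h2 : ∏ j ∈ Finset.Icc 1 y, (K+j) = (K+1) * ∏ j ∈ Finset.Icc 2 y, (K+j) := by
    rw [show Finset.Icc 1 y = insert 1 (Finset.Icc 2 y) from by
      ext j; simp; omega]
    rw [Finset.prod_insert (by simp)]
  calc y.factorial * Z * (K+1)
      = y.factorial * (Z * (K+1)) := by ring
    _ = y.factorial * ((K + 1 - My) * ((K + y).choose y)) := by rw [hcw]
    _ = (K + 1 - My) * (y.factorial * (K + y).choose y) := by ring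
    _ = (K + 1 - My) * ∏ j ∈ Finset.Icc 1 y, (K+j) := by rw [fact_mul_choose]
    _ = (K + 1 - My) * ((K+1) * ∏ j ∈ Finset.Icc 2 y, (K+j)) := by rw [h2]
    _ = (K + 1 - My) * (∏ j ∈ Finset.Icc 2 y, (K+j)) * (K+1) := by ring

end ZPF

open ZPF in
/-- the Zeta polynomial of the poset `P^F_{m,x,y}` of m-subdiagonal lattice
paths, encoded by words `(a₁,…,a_{x−1})` of nonnegative integers with
`m·(a₁+⋯+a_j) < j` for all `1 ≤ j ≤ x−1` (0-indexed: `m·(prefix sum up to j) < j+1`)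
and total sum at most `y`, ordered term-wise, is
`Z(u) = ((x − my − 1)(u−1) + 1)/y! · ∏_{j=2}^{y} ((x−1)(u−1) + j)`,
with the convention that for `y = 0` the whole expression is `1` (and the empty product
for `y ≤ 1` is `1`). Stated for every integer `u ≥ 2` after clearing the `y!`. -/
theorem zeta_PF (m x y u : ℕ) (hm : 1 ≤ m) (hxy : m * y < x) (hu : 2 ≤ u) :
    Nat.factorial y *
      Nat.card {c : Fin (u - 1) → (Fin (x - 1) → ℕ) //
        Monotone c ∧ ∀ s,
          (∀ j : Fin (x - 1), m * ∑ i ∈ Finset.Iic j, c s i < (j : ℕ) + 1) ∧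
          ∑ i, c s i ≤ y} =
    if y = 0 then 1
    else ((x - m * y - 1) * (u - 1) + 1) *
      ∏ j ∈ Finset.Icc 2 y, ((x - 1) * (u - 1) + j) := by
  have hN : u - 1 = (u-2) + 1 := by omega
  rw [hN]
  rw [chain_count m y (x-1) (u-2)]
  have hMy : (m*((u-2)+1)) * y ≤ (x-1)*((u-2)+1) := by
    have h1 : m * y ≤ x - 1 := by omega
    calc (m*((u-2)+1)) * y = (m*y) * ((u-2)+1) := by ring
    _ ≤ (x-1) * ((u-2)+1) := Nat.mul_le_mul_right _ h1
  rcases Nat.eq_zero_or_pos y with hy | hy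
  · subst hy
    simp only [if_pos rfl, Nat.factorial_zero, Nat.one_mul]
    apply Nat.eq_of_mul_eq_mul_right
      (show 0 < (x-1)*((u-2)+1) + 1 from Nat.succ_pos _)
    rw [count_words (m*((u-2)+1)) ((x-1)*((u-2)+1)) 0 hMy]
    simp
  · have hyne : ¬ y = 0 := by omega
    rw [if_neg hyne]
    have h1 : (x - m*y - 1) * ((u-2)+1) + 1
        = (x-1)*((u-2)+1) + 1 - (m*((u-2)+1)) * y := by
      have hsub : x - m*y - 1 = (x-1) - m*y := by omega
      have hmul : ((x-1) - m*y) * ((u-2)+1) = (x-1)*((u-2)+1) - (m*y)*((u-2)+1) :=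
        Nat.sub_mul _ _ _
      have hle : (m*y)*((u-2)+1) ≤ (x-1)*((u-2)+1) :=
        Nat.mul_le_mul_right _ (by omega)
      have hre : (m*((u-2)+1))*y = (m*y)*((u-2)+1) := by ring
      rw [hsub, hmul]
      omega
    rw [h1]
    exact final_alg ((x-1)*((u-2)+1)) ((m*((u-2)+1)) * y) _ y hy
      (count_words (m*((u-2)+1)) ((x-1)*((u-2)+1)) y hMy)
end

section
/- For all m ≥ 1 and all x, y with my < x and x > my + 1, the Zeta polynomials of the paths posets satisfy the recurrence Zeta^F_{m,x,y}(u) = Σ_{j=0}^{y} Zeta^F_{m,x−1,y−j}(u) · C(j + u − 2, j) for every integer u ≥ 2. -/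
open Finset

/-- The number of chains `A₁ ≤ ⋯ ≤ A_{u−1}` in the poset `P^F_{m,x,y}` of words
`(a₁,…,a_{x−1})` of nonnegative integers with `m·(a₁+⋯+a_j) < j` for all
`1 ≤ j ≤ x−1` (0-indexed: `m·(prefix sum up to j) < j+1`) and total sum at most `y`,
ordered term-wise. -/
noncomputable def zetaPF (m x y u : ℕ) : ℕ :=
  Nat.card {c : Fin (u - 1) → (Fin (x - 1) → ℕ) //
    Monotone c ∧ ∀ s,
      (∀ j : Fin (x - 1), m * ∑ i ∈ Finset.Iic j, c s i < (j : ℕ) + 1) ∧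
      ∑ i, c s i ≤ y}

/-- Monotone tuples valued in a linear order correspond to multisets. -/
noncomputable def monoEquivSym (α : Type*) [LinearOrder α] (k : ℕ) :
    {g : Fin k → α // Monotone g} ≃ Sym α k where
  toFun g := ⟨(List.ofFn g.1 : Multiset α), by simp⟩
  invFun s := ⟨fun i => (Multiset.sort s.1 (· ≤ ·)).get
      ⟨i.1, by simpa [s.2] using i.2⟩, by
    intro a b hab
    exact (Multiset.pairwise_sort s.1 (· ≤ ·)).rel_get_of_le (by exact hab)⟩
  left_inv g := by
    ext i
    have hperm : (Multiset.sort (↑(List.ofFn g.1) : Multiset α) (· ≤ ·)).Perm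
        (List.ofFn g.1) := Multiset.coe_eq_coe.mp (Multiset.sort_eq _ _)
    have heq : Multiset.sort (↑(List.ofFn g.1) : Multiset α) (· ≤ ·) = List.ofFn g.1 :=
      List.Perm.eq_of_pairwise' (Multiset.pairwise_sort _ _) g.2.sortedLE_ofFn.pairwise hperm
    simp only
    rw [List.get_of_eq heq]
    simp [List.get_ofFn]
  right_inv s := by
    apply Subtype.ext
    simp only
    have : List.ofFn (fun i : Fin k => (Multiset.sort s.1 (· ≤ ·)).get
        ⟨i.1, by simpa [s.2] using i.2⟩) = Multiset.sort s.1 (· ≤ ·) := by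
      apply List.ext_get (by simp [s.2])
      intro i h1 h2
      simp [List.get_ofFn]
    rw [this, Multiset.sort_eq]

lemma card_mono_le (k j : ℕ) :
    Nat.card {g : Fin k → ℕ // Monotone g ∧ ∀ s, g s ≤ j} = (j + k).choose k := by
  have e : {g : Fin k → ℕ // Monotone g ∧ ∀ s, g s ≤ j} ≃
      {g : Fin k → Fin (j+1) // Monotone g} := by
    refine ⟨fun g => ⟨fun i => ⟨g.1 i, Nat.lt_succ_of_le (g.2.2 i)⟩,
        fun a b hab => Fin.mk_le_mk.mpr (g.2.1 hab)⟩,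
      fun g => ⟨fun i => (g.1 i : ℕ),
        fun a b hab => g.2 hab, fun s => Nat.lt_succ_iff.mp (g.1 s).2⟩, ?_, ?_⟩
    · intro g; ext i; rfl
    · intro g; ext i; rfl
  rw [Nat.card_congr (e.trans (monoEquivSym (Fin (j+1)) k)), Nat.card_eq_fintype_card,
    Sym.card_sym_eq_choose]
  simp [Fintype.card_fin]

lemma Iic_last_eq_univ (n : ℕ) : Finset.Iic (Fin.last n) = Finset.univ := by
  ext i; simp [Fin.le_last]

lemma Iic_castSucc_eq_map {n : ℕ} (j : Fin n) :
    Finset.Iic (Fin.castSucc j) = (Finset.Iic j).map Fin.castSuccEmb := by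
  ext i
  simp only [Finset.mem_map, Finset.mem_Iic]
  constructor
  · intro hi
    have hlt : i.1 < n := lt_of_le_of_lt (by exact_mod_cast hi) j.2
    exact ⟨⟨i.1, hlt⟩, by simpa [Fin.le_def] using hi, by simp [Fin.castSuccEmb, Fin.ext_iff]⟩
  · rintro ⟨a, ha, rfl⟩
    exact Fin.castSucc_le_castSucc_iff.mpr ha

lemma sum_Iic_castSucc {n : ℕ} (w : Fin (n+1) → ℕ) (j : Fin n) :
    ∑ i ∈ Finset.Iic (Fin.castSucc j), w i = ∑ i ∈ Finset.Iic j, w (Fin.castSucc i) := by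
  rw [Iic_castSucc_eq_map, Finset.sum_map]
  rfl

lemma monotone_snoc {t : ℕ} (g : Fin t → ℕ) (j : ℕ) (hg : Monotone g)
    (hle : ∀ s, g s ≤ j) : Monotone (Fin.snoc g j : Fin (t+1) → ℕ) := by
  intro s s' h
  rcases eq_or_ne s' (Fin.last t) with rfl | hne'
  · rcases eq_or_ne s (Fin.last t) with rfl | hne
    · exact le_rfl
    · obtain ⟨s0, rfl⟩ := Fin.eq_castSucc_of_ne_last hne
      simpa using hle s0
  · obtain ⟨s'', rfl⟩ := Fin.eq_castSucc_of_ne_last hne'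
    have hs : s ≠ Fin.last t :=
      ne_of_lt (lt_of_le_of_lt h (Fin.castSucc_lt_last s''))
    obtain ⟨s0, rfl⟩ := Fin.eq_castSucc_of_ne_last hs
    simpa using hg (by simpa using h)

/-- Chain counts in explicit form. -/
noncomputable def Zc (m n y t : ℕ) : ℕ :=
  Nat.card {c : Fin t → (Fin n → ℕ) //
    Monotone c ∧ ∀ s,
      (∀ j : Fin n, m * ∑ i ∈ Finset.Iic j, c s i < (j : ℕ) + 1) ∧
      ∑ i, c s i ≤ y}

lemma zetaPF_eq_Zc (m x y u : ℕ) : zetaPF m x y u = Zc m (x - 1) y (u - 1) := rfl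

lemma finite_chains (m n y t : ℕ) :
    Finite {c : Fin t → (Fin n → ℕ) //
      Monotone c ∧ ∀ s,
        (∀ j : Fin n, m * ∑ i ∈ Finset.Iic j, c s i < (j : ℕ) + 1) ∧
        ∑ i, c s i ≤ y} := by
  have hb : ∀ (c : {c : Fin t → (Fin n → ℕ) //
      Monotone c ∧ ∀ s,
        (∀ j : Fin n, m * ∑ i ∈ Finset.Iic j, c s i < (j : ℕ) + 1) ∧
        ∑ i, c s i ≤ y}) (s : Fin t) (i : Fin n), c.1 s i ≤ y := fun c s i =>
    le_trans (Finset.single_le_sum (fun _ _ => Nat.zero_le _) (Finset.mem_univ i))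
      ((c.2.2 s).2)
  apply Finite.of_injective
    (fun c => (fun s i => (⟨c.1 s i, Nat.lt_succ_of_le (hb c s i)⟩ : Fin (y+1)) :
      Fin t → Fin n → Fin (y+1)))
  intro a b hab
  apply Subtype.ext; funext s i
  exact congrArg Fin.val (congrFun (congrFun hab s) i)

/-- The fiber equivalence: chains on words of length `n+1` with top-last entry `j`
correspond to pairs of a chain on words of length `n` with budget `y - j` and a
monotone sequence bounded by `j`. -/
noncomputable def chainFiberEquiv (m n y t j : ℕ) (hy : m * y ≤ n) (hj : j ≤ y) :
    {a : {c : Fin (t+1) → (Fin (n+1) → ℕ) //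
      Monotone c ∧ ∀ s,
        (∀ j' : Fin (n+1), m * ∑ i ∈ Finset.Iic j', c s i < (j' : ℕ) + 1) ∧
        ∑ i, c s i ≤ y} // a.1 (Fin.last t) (Fin.last n) = j} ≃
    ({c : Fin (t+1) → (Fin n → ℕ) //
      Monotone c ∧ ∀ s,
        (∀ j' : Fin n, m * ∑ i ∈ Finset.Iic j', c s i < (j' : ℕ) + 1) ∧
        ∑ i, c s i ≤ y - j} ×
     {g : Fin t → ℕ // Monotone g ∧ ∀ s, g s ≤ j}) := by
  refine ⟨fun a => (⟨fun s => Fin.init (a.1.1 s), ?_, fun s => ⟨?_, ?_⟩⟩,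
      ⟨fun s => a.1.1 (Fin.castSucc s) (Fin.last n), ?_, ?_⟩),
    fun p => ⟨⟨fun s => Fin.snoc (p.1.1 s)
        ((Fin.snoc p.2.1 j : Fin (t+1) → ℕ) s), ?_, fun s => ⟨?_, ?_⟩⟩, ?_⟩, ?_, ?_⟩
  -- toFun: init chain is monotone
  · intro s s' hss i
    exact a.1.2.1 hss i.castSucc
  -- toFun: prefix conditions for init
  · intro j'
    have := (a.1.2.2 s).1 (Fin.castSucc j')
    rw [sum_Iic_castSucc] at this
    simpa [Fin.init] using this
  -- toFun: sum bound for init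
  · have hmono : ∀ i : Fin n, Fin.init (a.1.1 s) i ≤ Fin.init (a.1.1 (Fin.last t)) i :=
      fun i => a.1.2.1 (Fin.le_last s) i.castSucc
    have htop : ∑ i, Fin.init (a.1.1 (Fin.last t)) i + j ≤ y := by
      have hsum := (a.1.2.2 (Fin.last t)).2
      rw [Fin.sum_univ_castSucc] at hsum
      have h2 := a.2
      show ∑ i : Fin n, a.1.1 (Fin.last t) (Fin.castSucc i) + j ≤ y
      omega
    calc ∑ i, Fin.init (a.1.1 s) i ≤ ∑ i, Fin.init (a.1.1 (Fin.last t)) i :=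
          Finset.sum_le_sum fun i _ => hmono i
      _ ≤ y - j := Nat.le_sub_of_add_le htop
  -- toFun: g monotone
  · intro s s' hss
    exact a.1.2.1 (Fin.castSucc_le_castSucc_iff.mpr hss) (Fin.last n)
  -- toFun: g bounded by j
  · intro s
    exact le_trans (a.1.2.1 (Fin.le_last _) (Fin.last n)) (le_of_eq a.2)
  -- invFun: monotone chain
  · intro s s' hss i
    rcases eq_or_ne i (Fin.last n) with rfl | hne
    · simpa using monotone_snoc p.2.1 j p.2.2.1 p.2.2.2 hss
    · obtain ⟨i0, rfl⟩ := Fin.eq_castSucc_of_ne_last hne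
      simpa using p.1.2.1 hss i0
  -- invFun: prefix conditions
  · intro j'
    rcases eq_or_ne j' (Fin.last n) with rfl | hne
    · rw [Iic_last_eq_univ, Fin.sum_univ_castSucc]
      simp only [Fin.snoc_castSucc, Fin.snoc_last]
      have hb : (Fin.snoc p.2.1 j : Fin (t+1) → ℕ) s ≤ j := by
        rcases eq_or_ne s (Fin.last t) with rfl | hne'
        · simp
        · obtain ⟨s0, rfl⟩ := Fin.eq_castSucc_of_ne_last hne'
          simpa using p.2.2.2 s0
      have hsum : ∑ i, p.1.1 s i + (Fin.snoc p.2.1 j : Fin (t+1) → ℕ) s ≤ y := by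
        calc ∑ i, p.1.1 s i + (Fin.snoc p.2.1 j : Fin (t+1) → ℕ) s
            ≤ (y - j) + j := Nat.add_le_add (p.1.2.2 s).2 hb
          _ = y := Nat.sub_add_cancel hj
      calc m * (∑ i, p.1.1 s i + (Fin.snoc p.2.1 j : Fin (t+1) → ℕ) s)
          ≤ m * y := Nat.mul_le_mul_left m hsum
        _ < (Fin.last n : ℕ) + 1 := by simp [Fin.val_last]; omega
    · obtain ⟨j0, rfl⟩ := Fin.eq_castSucc_of_ne_last hne
      rw [sum_Iic_castSucc]
      simp only [Fin.snoc_castSucc]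
      simpa using (p.1.2.2 s).1 j0
  -- invFun: total sum
  · rw [Fin.sum_univ_castSucc]
    simp only [Fin.snoc_castSucc, Fin.snoc_last]
    have hb : (Fin.snoc p.2.1 j : Fin (t+1) → ℕ) s ≤ j := by
      rcases eq_or_ne s (Fin.last t) with rfl | hne'
      · simp
      · obtain ⟨s0, rfl⟩ := Fin.eq_castSucc_of_ne_last hne'
        simpa using p.2.2.2 s0
    calc ∑ i, p.1.1 s i + (Fin.snoc p.2.1 j : Fin (t+1) → ℕ) s
        ≤ (y - j) + j := Nat.add_le_add (p.1.2.2 s).2 hb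
      _ = y := Nat.sub_add_cancel hj
  -- invFun: fiber condition
  · simp
  -- left_inv
  · intro a
    apply Subtype.ext
    apply Subtype.ext
    funext s
    show Fin.snoc (Fin.init (a.1.1 s))
        ((Fin.snoc (fun s' : Fin t => a.1.1 (Fin.castSucc s') (Fin.last n)) j :
          Fin (t+1) → ℕ) s) = a.1.1 s
    have hBs : (Fin.snoc (fun s' : Fin t => a.1.1 (Fin.castSucc s') (Fin.last n)) j :
        Fin (t+1) → ℕ) s = a.1.1 s (Fin.last n) := by
      rcases eq_or_ne s (Fin.last t) with rfl | hne
      · rw [Fin.snoc_last]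
        exact a.2.symm
      · obtain ⟨s0, rfl⟩ := Fin.eq_castSucc_of_ne_last hne
        simp
    rw [hBs, Fin.snoc_init_self]
  -- right_inv
  · intro p
    refine Prod.ext ?_ ?_
    · apply Subtype.ext
      funext s
      simp only [Fin.init_snoc]
    · apply Subtype.ext
      funext s
      simp only [Fin.snoc_last, Fin.snoc_castSucc]

lemma Zc_rec (m n y t : ℕ) (hy : m * y ≤ n) :
    Zc m (n+1) y (t+1) =
      ∑ j ∈ Finset.range (y + 1), Zc m n (y - j) (t+1) * Nat.choose (j + t) j := by
  classical
  set A := {c : Fin (t+1) → (Fin (n+1) → ℕ) //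
      Monotone c ∧ ∀ s,
        (∀ j' : Fin (n+1), m * ∑ i ∈ Finset.Iic j', c s i < (j' : ℕ) + 1) ∧
        ∑ i, c s i ≤ y} with hA
  have : Finite A := finite_chains m (n+1) y (t+1)
  have : Fintype A := Fintype.ofFinite A
  have hcard : Zc m (n+1) y (t+1) = Fintype.card A := Nat.card_eq_fintype_card
  have hfib : ∀ a : A, a.1 (Fin.last t) (Fin.last n) ∈ Finset.range (y+1) := by
    intro a
    rw [Finset.mem_range, Nat.lt_succ_iff]
    exact le_trans (Finset.single_le_sum (fun _ _ => Nat.zero_le _)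
      (Finset.mem_univ (Fin.last n))) ((a.2.2 (Fin.last t)).2)
  rw [hcard, ← Finset.card_univ,
    Finset.card_eq_sum_card_fiberwise (fun a _ => hfib a)]
  refine Finset.sum_congr rfl fun j hj => ?_
  rw [Finset.mem_range, Nat.lt_succ_iff] at hj
  have hfil : (Finset.univ.filter
      (fun a : A => a.1 (Fin.last t) (Fin.last n) = j)).card =
      Fintype.card {a : A // a.1 (Fin.last t) (Fin.last n) = j} :=
    (Fintype.card_subtype _).symm
  rw [hfil, ← Nat.card_eq_fintype_card,
    Nat.card_congr (chainFiberEquiv m n y t j hy hj), Nat.card_prod, Zc,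
    card_mono_le]
  have hsymm : (j + t).choose t = (j + t).choose j := by
    have h := Nat.choose_symm (Nat.le_add_right j t)
    simpa using h
  rw [hsymm]

/-- for all `m ≥ 1` and all `x, y` with `my < x` and `x > my + 1`, the
chain counts satisfy
`Zeta^F_{m,x,y}(u) = Σ_{j=0}^{y} Zeta^F_{m,x−1,y−j}(u) · C(j + u − 2, j)`
for every integer `u ≥ 2`. -/
theorem zetaPF_recurrence (m x y u : ℕ) (hm : 1 ≤ m) (hx : m * y + 1 < x)
    (hu : 2 ≤ u) :
    zetaPF m x y u =
      ∑ j ∈ Finset.range (y + 1), zetaPF m (x - 1) (y - j) u * Nat.choose (j + u - 2) j := by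
  have hx1 : x - 1 = (x - 2) + 1 := by omega
  have hu1 : u - 1 = (u - 2) + 1 := by omega
  have hyn : m * y ≤ x - 2 := by omega
  rw [zetaPF_eq_Zc, hx1, hu1, Zc_rec m (x-2) y (u-2) hyn]
  refine Finset.sum_congr rfl fun j hj => ?_
  rw [zetaPF_eq_Zc, show x - 2 + 1 - 1 = x - 2 from by omega, hu1,
    show j + u - 2 = j + (u - 2) from by omega]
end

section
/- For m ≥ 1 and y ≥ 1, the posets P^F_{m, my+1, y} and P^F_{m, my+1, y−1} are isomorphic. -/
open Finset

/-- The poset `P^F_{m,x,y}` of words `(a₁,…,a_{x−1})` of nonnegative integers with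
`m·(a₁+⋯+a_j) < j` for all `1 ≤ j ≤ x−1` (0-indexed: `m·(prefix sum up to j) < j+1`)
and total sum at most `y`, ordered by term-wise comparison (order inherited from the
pointwise order on `Fin (x−1) → ℕ`). -/
abbrev PF (m x y : ℕ) :=
  {a : Fin (x - 1) → ℕ //
    (∀ j : Fin (x - 1), m * ∑ i ∈ Finset.Iic j, a i < (j : ℕ) + 1) ∧ ∑ i, a i ≤ y}

lemma PF_key (m y : ℕ) (hm : 1 ≤ m) (hy : 1 ≤ y)
    (a : Fin (m * y + 1 - 1) → ℕ)
    (h : ∀ j : Fin (m * y + 1 - 1), m * ∑ i ∈ Finset.Iic j, a i < (j : ℕ) + 1) :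
    ∑ i, a i ≤ y - 1 := by
  have hpos : 0 < m * y := Nat.mul_pos hm hy
  have hpos' : 0 < m * y + 1 - 1 := by omega
  haveI : NeZero (m * y + 1 - 1) := ⟨by omega⟩
  set j : Fin (m * y + 1 - 1) := ⟨m * y - 1, by omega⟩ with hj
  have htop : ∀ i : Fin (m * y + 1 - 1), i ≤ j := by
    intro i
    have := i.is_lt
    rw [Fin.le_def, hj]
    simp only []
    omega
  have hIic : Finset.Iic j = Finset.univ := by
    ext i; simp [htop i]
  have := h j
  rw [hIic] at this
  have hlt : m * ∑ i, a i < m * y := by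
    simpa [hj] using this.trans_le (by omega)
  have : ∑ i, a i < y := lt_of_mul_lt_mul_left hlt (Nat.zero_le m)
  omega

/-- for `m ≥ 1` and `y ≥ 1`, the posets `P^F_{m, my+1, y}` and
`P^F_{m, my+1, y−1}` are isomorphic. -/
theorem PF_orderIso (m y : ℕ) (hm : 1 ≤ m) (hy : 1 ≤ y) :
    Nonempty (PF m (m * y + 1) y ≃o PF m (m * y + 1) (y - 1)) := by
  refine ⟨{
    toFun := fun a => ⟨a.1, a.2.1, PF_key m y hm hy a.1 a.2.1⟩
    invFun := fun a => ⟨a.1, a.2.1, le_trans a.2.2 (Nat.sub_le y 1)⟩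
    left_inv := fun a => rfl
    right_inv := fun a => rfl
    map_rel_iff' := Iff.rfl }⟩
end

section
/- The hypergeometric summation identity Σ_{j≥0} (1/(k−j)!) · ∏_{r=2}^{ℓ−j} (x − r + k − j) = (1/k!) · (1/(x−1)) · ∏_{r=1}^{ℓ} (x − r + k) holds as an identity of rational functions in x, for all integers 0 ≤ k ≤ ℓ (the sum over j ranges over 0 ≤ j ≤ k, with the convention that the product ∏_{r=2}^{ℓ−j} is 1 when ℓ−j ≤ 1 and 1/(x−1+k−j) when ℓ−j = 0). -/
open Finset

lemma Xm1_ne : (RatFunc.X : RatFunc ℚ) - 1 ≠ 0 := by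
  have : ((RatFunc.X : RatFunc ℚ) - 1) =
      algebraMap (Polynomial ℚ) (RatFunc ℚ) (Polynomial.X - Polynomial.C 1) := by
    simp [map_sub, RatFunc.algebraMap_X]
  rw [this]
  exact RatFunc.algebraMap_ne_zero (Polynomial.X_sub_C_ne_zero 1)

lemma prod_Icc_shift (m k : ℕ) :
    (∏ r ∈ Finset.Icc 2 (m+1),
      ((RatFunc.X : RatFunc ℚ) - (r : RatFunc ℚ) + ((k : RatFunc ℚ) + 1))) =
    ∏ r ∈ Finset.Icc 1 m,
      ((RatFunc.X : RatFunc ℚ) - (r : RatFunc ℚ) + (k : RatFunc ℚ)) := by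
  have h : Finset.Icc 2 (m+1) = Finset.map (addRightEmbedding 1) (Finset.Icc 1 m) := by
    rw [Finset.map_add_right_Icc]
  rw [h, Finset.prod_map]
  refine Finset.prod_congr rfl fun i _ => ?_
  simp only [addRightEmbedding_apply]
  push_cast
  ring

/-- the summation identity
`Σ_{j=0}^{k} (1/(k−j)!) · ∏_{r=2}^{ℓ−j} (x − r + k − j)
  = (1/k!) · (1/(x−1)) · ∏_{r=1}^{ℓ} (x − r + k)`
as an identity of rational functions in `x` (here `x = X` in `RatFunc ℚ`), for all
integers `0 ≤ k ≤ ℓ`, with the convention that the product `∏_{r=2}^{s}` is `1` when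
`s = 1` and is `1/(x − 1 + k − j)` when `s = ℓ − j = 0`. -/
theorem summing_lemma_one (k l : ℕ) (hkl : k ≤ l) :
    ∑ j ∈ Finset.range (k + 1),
      ((Nat.factorial (k - j) : RatFunc ℚ))⁻¹ *
        (if l - j = 0 then
            ((RatFunc.X : RatFunc ℚ) - 1 + ((k : RatFunc ℚ) - (j : RatFunc ℚ)))⁻¹
          else
            ∏ r ∈ Finset.Icc 2 (l - j),
              ((RatFunc.X : RatFunc ℚ) - (r : RatFunc ℚ) +
                ((k : RatFunc ℚ) - (j : RatFunc ℚ)))) =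
    ((Nat.factorial k : RatFunc ℚ))⁻¹ * ((RatFunc.X : RatFunc ℚ) - 1)⁻¹ *
      ∏ r ∈ Finset.Icc 1 l,
        ((RatFunc.X : RatFunc ℚ) - (r : RatFunc ℚ) + (k : RatFunc ℚ)) := by
  induction k generalizing l with
  | zero =>
    rw [show (0:ℕ)+1 = 1 from rfl, Finset.sum_range_one]
    simp only [Nat.sub_zero, Nat.factorial_zero, Nat.cast_one, inv_one, one_mul,
      Nat.cast_zero, sub_zero]
    rcases Nat.eq_zero_or_pos l with hl | hl
    · subst hl
      simp
    · rw [if_neg (by omega)]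
      have h1 : Finset.Icc 1 l = insert 1 (Finset.Icc 2 l) := by
        ext r; simp; omega
      rw [h1, Finset.prod_insert (by simp)]
      push_cast
      rw [show (RatFunc.X : RatFunc ℚ) - 1 + 0 = RatFunc.X - 1 by ring]
      rw [show ((RatFunc.X : RatFunc ℚ) - 1)⁻¹ * ((RatFunc.X - 1) * ∏ r ∈ Finset.Icc 2 l,
        (RatFunc.X - (r:RatFunc ℚ) + 0)) = ((RatFunc.X - 1)⁻¹ * (RatFunc.X - 1)) *
          ∏ r ∈ Finset.Icc 2 l, (RatFunc.X - (r:RatFunc ℚ) + 0) by ring]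
      rw [inv_mul_cancel₀ Xm1_ne, one_mul]
  | succ k ih =>
    obtain ⟨m, rfl⟩ : ∃ m, l = m + 1 := ⟨l - 1, by omega⟩
    have hkm : k ≤ m := by omega
    rw [Finset.sum_range_succ']
    have hshift : (∑ j ∈ Finset.range (k + 1),
        ((Nat.factorial (k + 1 - (j + 1)) : RatFunc ℚ))⁻¹ *
          (if m + 1 - (j + 1) = 0 then
              ((RatFunc.X : RatFunc ℚ) - 1 + (((k+1 : ℕ) : RatFunc ℚ) - ((j+1 : ℕ) : RatFunc ℚ)))⁻¹
            else
              ∏ r ∈ Finset.Icc 2 (m + 1 - (j + 1)),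
                ((RatFunc.X : RatFunc ℚ) - (r : RatFunc ℚ) +
                  (((k+1 : ℕ) : RatFunc ℚ) - ((j+1 : ℕ) : RatFunc ℚ))))) =
        ∑ j ∈ Finset.range (k + 1),
        ((Nat.factorial (k - j) : RatFunc ℚ))⁻¹ *
          (if m - j = 0 then
              ((RatFunc.X : RatFunc ℚ) - 1 + ((k : RatFunc ℚ) - (j : RatFunc ℚ)))⁻¹
            else
              ∏ r ∈ Finset.Icc 2 (m - j),
                ((RatFunc.X : RatFunc ℚ) - (r : RatFunc ℚ) +
                  ((k : RatFunc ℚ) - (j : RatFunc ℚ)))) := by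
      refine Finset.sum_congr rfl fun j _ => ?_
      have h1 : k + 1 - (j + 1) = k - j := by omega
      have h2 : m + 1 - (j + 1) = m - j := by omega
      have h3 : (((k+1 : ℕ) : RatFunc ℚ) - ((j+1 : ℕ) : RatFunc ℚ)) =
          ((k : RatFunc ℚ) - (j : RatFunc ℚ)) := by push_cast; ring
      rw [h1, h2, h3]
    rw [hshift, ih m hkm]
    -- now the j = 0 term
    rw [if_neg (by omega)]
    simp only [Nat.sub_zero, Nat.cast_zero, sub_zero]
    have hcast : ((k+1 : ℕ) : RatFunc ℚ) = (k : RatFunc ℚ) + 1 := by push_cast; ring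
    rw [hcast, prod_Icc_shift m k]
    have hR : (∏ r ∈ Finset.Icc 1 (m+1),
        ((RatFunc.X : RatFunc ℚ) - (r : RatFunc ℚ) + ((k : RatFunc ℚ) + 1))) =
        ((RatFunc.X : RatFunc ℚ) + (k : RatFunc ℚ)) *
        ∏ r ∈ Finset.Icc 1 m,
          ((RatFunc.X : RatFunc ℚ) - (r : RatFunc ℚ) + (k : RatFunc ℚ)) := by
      have h0 : Finset.Icc 1 (m+1) = Finset.map (addRightEmbedding 1) (Finset.Icc 0 m) := by
        rw [Finset.map_add_right_Icc]
      rw [h0, Finset.prod_map]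
      simp only [addRightEmbedding_apply]
      have hc : ∀ i ∈ Finset.Icc 0 m,
          ((RatFunc.X : RatFunc ℚ) - ((i + 1 : ℕ) : RatFunc ℚ) + ((k : RatFunc ℚ) + 1)) =
          (RatFunc.X : RatFunc ℚ) - (i : RatFunc ℚ) + (k : RatFunc ℚ) := by
        intro i _; push_cast; ring
      rw [Finset.prod_congr rfl hc]
      have h1 : Finset.Icc 0 m = insert 0 (Finset.Icc 1 m) := by
        ext r; simp; omega
      rw [h1, Finset.prod_insert (by simp)]
      norm_num
    rw [hR]
    have hfac : ((Nat.factorial (k+1) : RatFunc ℚ)) =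
        ((k : RatFunc ℚ) + 1) * (Nat.factorial k : RatFunc ℚ) := by
      rw [Nat.factorial_succ]; push_cast; ring
    have hnat : ∀ n : ℕ, n ≠ 0 → ((n : RatFunc ℚ)) ≠ 0 := by
      intro n hn
      rw [← map_natCast (algebraMap (Polynomial ℚ) (RatFunc ℚ))]
      exact RatFunc.algebraMap_ne_zero (Nat.cast_ne_zero.mpr hn)
    have hfne : (Nat.factorial k : RatFunc ℚ) ≠ 0 := hnat _ (Nat.factorial_ne_zero k)
    have hk1 : ((k : RatFunc ℚ) + 1) ≠ 0 := by
      have := hnat (k+1) (by omega)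
      push_cast at this; exact this
    have hx : (RatFunc.X : RatFunc ℚ) - 1 ≠ 0 := Xm1_ne
    rw [hfac]
    field_simp
    ring
end

section
/- For n ≥ 2, the number of lattice points of the polytope Q_{h_n} for the arbor h_n (root vertex with n−1 elements plus one leaf with one element) equals C(2n−1, n−1) + C(2n−2, n−1), which equals the number (3n−1)/n · C(2n−2, n−1) of vertices of the n-dimensional halohedron. -/
open Finset

private instance finSumLeAux (k m : ℕ) : Finite {f : Fin k → ℕ // ∑ i, f i ≤ m} := by
  refine Finite.of_injective (fun f => (fun i => (⟨f.1 i, by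
      have h1 : f.1 i ≤ ∑ j, f.1 j :=
        Finset.single_le_sum (fun j _ => Nat.zero_le _) (mem_univ i)
      have h2 := f.2; omega⟩ : Fin (m+1)) : Fin k → Fin (m+1))) ?_
  intro f g h
  ext i
  exact congrArg Fin.val (congrFun h i)

private def splitEquiv (k m : ℕ) : {f : Fin (k+1) → ℕ // ∑ i, f i ≤ m+1} ≃
    ({f : Fin k → ℕ // ∑ i, f i ≤ m+1} ⊕ {f : Fin (k+1) → ℕ // ∑ i, f i ≤ m}) where
  toFun f := if h : f.1 0 = 0 then Sum.inl ⟨Fin.tail f.1, by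
      have hs := f.2
      rw [Fin.sum_univ_succ] at hs
      simp only [Fin.tail]
      omega⟩
    else Sum.inr ⟨Fin.cons (f.1 0 - 1) (Fin.tail f.1), by
      have hs := f.2
      rw [Fin.sum_univ_succ] at hs
      rw [Fin.sum_univ_succ]
      simp only [Fin.cons_zero, Fin.cons_succ, Fin.tail]
      omega⟩
  invFun g := Sum.elim (fun f => ⟨Fin.cons 0 f.1, by
      have hs := f.2
      rw [Fin.sum_univ_succ]
      simpa using hs.trans (by omega)⟩)
    (fun f => ⟨Fin.cons (f.1 0 + 1) (Fin.tail f.1), by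
      have hs := f.2
      rw [Fin.sum_univ_succ] at hs
      rw [Fin.sum_univ_succ]
      simp only [Fin.cons_zero, Fin.cons_succ, Fin.tail]
      omega⟩) g
  left_inv := by
    intro f
    by_cases h : f.1 0 = 0
    · simp only [h, dif_pos]
      apply Subtype.ext
      simp only [Sum.elim_inl]
      rw [← h, Fin.cons_self_tail]
    · simp only [h, dif_neg, not_false_iff]
      apply Subtype.ext
      simp only [Sum.elim_inr, Fin.cons_zero, Fin.tail_cons]
      have h' : f.1 0 - 1 + 1 = f.1 0 := by omega
      rw [h', Fin.cons_self_tail]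
  right_inv := by
    intro g
    rcases g with f | f
    · simp only [Sum.elim_inl]
      simp only [Fin.cons_zero, ↓reduceDIte]
      congr 1
    · simp only [Sum.elim_inr]
      simp only [Fin.cons_zero, Nat.add_one_ne_zero, ↓reduceDIte]
      congr 1
      apply Subtype.ext
      simp only [Fin.cons_zero, Fin.tail_cons, Nat.add_sub_cancel]
      exact Fin.cons_self_tail f.1

private lemma count_sum_le_step (k : ℕ)
    (ihk : ∀ m, Nat.card {f : Fin k → ℕ // ∑ i, f i ≤ m} = (m + k).choose k) :
    ∀ m, Nat.card {f : Fin (k + 1) → ℕ // ∑ i, f i ≤ m} = (m + (k + 1)).choose (k + 1)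
  | 0 => by
    rw [Nat.zero_add, Nat.choose_self, Nat.card_eq_one_iff_unique]
    constructor
    · constructor
      intro f g
      ext i
      have hf := f.2; have hg := g.2
      have h1 : f.1 i ≤ ∑ j, f.1 j :=
        Finset.single_le_sum (fun j _ => Nat.zero_le _) (mem_univ i)
      have h2 : g.1 i ≤ ∑ j, g.1 j :=
        Finset.single_le_sum (fun j _ => Nat.zero_le _) (mem_univ i)
      omega
    · exact ⟨⟨fun _ => 0, by simp⟩⟩
  | (j + 1) => by
    have h1 : j + 1 + (k + 1) = (j + 1 + k) + 1 := by omega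
    have h2 : j + (k + 1) = j + 1 + k := by omega
    have ihj := count_sum_le_step k ihk j
    rw [Nat.card_congr (splitEquiv k j), Nat.card_sum, ihk (j + 1), ihj,
      h1, h2, Nat.choose_succ_succ]

private lemma count_sum_le_aux (k m : ℕ) :
    Nat.card {f : Fin k → ℕ // ∑ i, f i ≤ m} = (m + k).choose k := by
  induction k generalizing m with
  | zero =>
    rw [Nat.choose_zero_right, Nat.card_eq_one_iff_unique]
    constructor
    · constructor
      intro f g
      ext i
      exact i.elim0
    · exact ⟨⟨fun i => i.elim0, by simp⟩⟩
  | succ k ihk => exact count_sum_le_step k (fun m => ihk m) m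

private def pairEquiv (k n : ℕ) (hn : 1 ≤ n) :
    {p : (Fin k → ℕ) × ℕ // p.2 ≤ 1 ∧ (∑ i, p.1 i) + p.2 ≤ n} ≃
    ({f : Fin k → ℕ // ∑ i, f i ≤ n} ⊕ {f : Fin k → ℕ // ∑ i, f i ≤ n - 1}) where
  toFun p := if h : p.1.2 = 0 then Sum.inl ⟨p.1.1, by have := p.2.2; omega⟩
    else Sum.inr ⟨p.1.1, by have h1 := p.2.1; have h2 := p.2.2; omega⟩
  invFun g := Sum.elim (fun f => ⟨(f.1, 0), by
      constructor
      · omega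
      · show (∑ i, f.1 i) + 0 ≤ n
        have := f.2; omega⟩)
    (fun f => ⟨(f.1, 1), by
      constructor
      · exact le_refl 1
      · show (∑ i, f.1 i) + 1 ≤ n
        have := f.2; omega⟩) g
  left_inv := by
    rintro ⟨⟨a, b⟩, hp⟩
    dsimp only
    by_cases h : b = 0
    · rw [dif_pos h, Sum.elim_inl]
      apply Subtype.ext
      show (a, 0) = (a, b)
      rw [h]
    · have h1 : b = 1 := by have := hp.1; omega
      rw [dif_neg h, Sum.elim_inr]
      apply Subtype.ext
      show (a, 1) = (a, b)
      rw [h1]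
  right_inv := by
    intro g
    rcases g with f | f
    · dsimp only [Sum.elim_inl]
      rw [dif_pos rfl]
    · dsimp only [Sum.elim_inr]
      rw [dif_neg one_ne_zero]

/-- for `n ≥ 2`, the number of lattice points of the polytope `Q_{h_n}`
(for the arbor `h_n` with `n−1` elements in the root vertex and one leaf with one
element), i.e. of points `(x₁,…,x_{n−1}, y) ∈ ℕ^n` with `y ≤ 1` and
`x₁+⋯+x_{n−1}+y ≤ n`, equals `C(2n−1, n−1) + C(2n−2, n−1)`, which equals the number
`(3n−1)/n · C(2n−2, n−1)` of vertices of the `n`-dimensional halohedron. -/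
theorem halohedron_vertex_count (n : ℕ) (hn : 2 ≤ n) :
    Nat.card {p : (Fin (n - 1) → ℕ) × ℕ //
        p.2 ≤ 1 ∧ (∑ i, p.1 i) + p.2 ≤ n} =
      Nat.choose (2 * n - 1) (n - 1) + Nat.choose (2 * n - 2) (n - 1)
    ∧ n * (Nat.choose (2 * n - 1) (n - 1) + Nat.choose (2 * n - 2) (n - 1)) =
      (3 * n - 1) * Nat.choose (2 * n - 2) (n - 1) := by
  obtain ⟨m, rfl⟩ : ∃ m, n = m + 2 := ⟨n - 2, by omega⟩
  simp only [show m + 2 - 1 = m + 1 from rfl, show 2 * (m + 2) - 1 = 2 * m + 3 by omega,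
    show 2 * (m + 2) - 2 = 2 * m + 2 by omega, show 3 * (m + 2) - 1 = 3 * m + 5 by omega]
  have hsymm : (2 * m + 3).choose (m + 2) = (2 * m + 3).choose (m + 1) := by
    have := Nat.choose_symm (show m + 1 ≤ 2 * m + 3 by omega)
    rwa [show 2 * m + 3 - (m + 1) = m + 2 by omega] at this
  have hkey : (m + 2) * (2 * m + 3).choose (m + 1) = (2 * m + 3) * (2 * m + 2).choose (m + 1) := by
    have h := Nat.add_one_mul_choose_eq (2 * m + 2) (m + 1)
    rw [show 2 * m + 2 + 1 = 2 * m + 3 by omega] at h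
    rw [show (m + 1) + 1 = m + 2 by omega] at h
    rw [hsymm] at h
    rw [h]
    ring
  constructor
  · show Nat.card {p : (Fin (m + 1) → ℕ) × ℕ // p.2 ≤ 1 ∧ (∑ i, p.1 i) + p.2 ≤ m + 2} = _
    rw [Nat.card_congr (pairEquiv (m + 1) (m + 2) (by omega)), Nat.card_sum,
      count_sum_le_aux, count_sum_le_aux]
    congr 1 <;> congr 1 <;> omega
  · rw [Nat.mul_add, hkey]
    ring
end

section
/- For n ≥ 2, the polynomial Σ_{j=0}^{n−1} C(n−1,j)·X^j + Σ_{j=1}^{n} (n−j+1)·C(n−1,j−1)·X^j equals (X+1)^{n−2}·(X² + (n+1)X + 1), the h-vector of the n-dimensional Hochschild polytope. -/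
open Polynomial Finset

lemma lemA (m : ℕ) : ((X : ℚ[X]) + 1) ^ m
    = ∑ j ∈ Finset.range (m + 1), Polynomial.C ((m.choose j : ℚ)) * X ^ j := by
  rw [add_pow]
  refine Finset.sum_congr rfl fun j hj => ?_
  rw [one_pow, mul_one, Polynomial.C_eq_natCast, mul_comm]

lemma lemB (p : ℕ) :
    ∑ i ∈ Finset.range (p + 2), Polynomial.C ((i * (p+1).choose i : ℕ) : ℚ) * X ^ i
      = Polynomial.C ((p : ℚ) + 1) * X * ((X : ℚ[X]) + 1) ^ p := by
  rw [Finset.sum_range_succ']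
  simp only [Nat.zero_mul, Nat.cast_zero, Polynomial.C_0, zero_mul, add_zero]
  rw [lemA, Finset.mul_sum]
  refine Finset.sum_congr rfl fun k hk => ?_
  have key : (k + 1) * (p + 1).choose (k + 1) = (p + 1) * p.choose k := by
    rw [mul_comm ((k:ℕ)+1), ← Nat.add_one_mul_choose_eq]
  rw [key, Nat.cast_mul, map_mul]
  push_cast
  ring

/-- for `n ≥ 2`, the `h`-vector of the corolla arbor `t_n`,
`Σ_{j=0}^{n−1} C(n−1,j)·X^j + Σ_{j=1}^{n} (n−j+1)·C(n−1,j−1)·X^j`, equals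
`(X+1)^{n−2}·(X² + (n+1)X + 1)`, the `h`-vector of the `n`-dimensional Hochschild
polytope. -/
theorem h_vector_hochschild (n : ℕ) (hn : 2 ≤ n) :
    (∑ j ∈ Finset.range n, Polynomial.C ((Nat.choose (n - 1) j : ℚ)) * X ^ j) +
      (∑ j ∈ Finset.Icc 1 n,
        Polynomial.C (((n - j + 1 : ℕ) : ℚ) * (Nat.choose (n - 1) (j - 1) : ℚ)) * X ^ j) =
    (X + 1) ^ (n - 2) * (X ^ 2 + Polynomial.C ((n : ℚ) + 1) * X + 1) := by
  obtain ⟨p, rfl⟩ := Nat.exists_eq_add_of_le hn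
  have h1 : 2 + p - 1 = p + 1 := by omega
  have h2 : 2 + p - 2 = p := by omega
  have h3 : 2 + p = p + 2 := by omega
  rw [h1, h2, h3]
  have hIcc : ∑ j ∈ Finset.Icc 1 (p + 2),
      Polynomial.C (((p + 2 - j + 1 : ℕ) : ℚ) * ((p+1).choose (j - 1) : ℚ)) * X ^ j
      = Polynomial.C ((p : ℚ) + 2) * X * ((X : ℚ[X]) + 1) ^ (p + 1)
        - X * (Polynomial.C ((p : ℚ) + 1) * X * ((X : ℚ[X]) + 1) ^ p) := by
    rw [← Finset.Ico_add_one_right_eq_Icc, Finset.sum_Ico_eq_sum_range]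
    have h4 : p + 2 + 1 - 1 = p + 2 := by omega
    rw [h4]
    have step : ∀ i ∈ Finset.range (p + 2),
        Polynomial.C (((p + 2 - (1 + i) + 1 : ℕ) : ℚ) * ((p+1).choose ((1 + i) - 1) : ℚ)) * X ^ (1 + i)
        = Polynomial.C ((p : ℚ) + 2) * (Polynomial.C (((p+1).choose i : ℚ)) * X ^ i) * X
          - X * (Polynomial.C ((i * (p+1).choose i : ℕ) : ℚ) * X ^ i) := by
      intro i hi
      rw [Finset.mem_range] at hi
      have e1 : p + 2 - (1 + i) + 1 = p + 2 - i := by omega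
      have e2 : (1 + i) - 1 = i := by omega
      have e3 : ((p + 2 - i : ℕ) : ℚ) = (p : ℚ) + 2 - i := by
        have : i ≤ p + 2 := by omega
        push_cast [this]
        ring
      rw [e1, e2, e3, Nat.cast_mul]
      rw [show ((p : ℚ) + 2 - i) * ((p+1).choose i : ℚ)
          = ((p : ℚ) + 2) * ((p+1).choose i : ℚ) - (i : ℚ) * ((p+1).choose i : ℚ) from by ring]
      rw [map_sub, map_mul, map_mul]
      ring
    rw [Finset.sum_congr rfl step, Finset.sum_sub_distrib, ← Finset.sum_mul,
      ← Finset.mul_sum, ← Finset.mul_sum, ← lemA, lemB]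
    ring
  rw [hIcc, ← lemA]
  simp only [map_add, map_one, map_ofNat, Polynomial.C_eq_natCast, Nat.cast_add, Nat.cast_ofNat]
  ring
end
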